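/- arXiv:1803.02288 — 6 statements merged into one kernel-verified Lean document; each statement's English description precedes it below -/
import Mathlib

section
/- Fix positive integers D, K, M, a parameter ϱ > 0, a D×K complex matrix A = [a_1,…,a_K], and a D×M complex matrix Y, and set Σ̂_y = (1/M) Y Y^H. Suppose X* ∈ ℂ^{K×M} is a global minimizer over ℂ^{K×M} of the ℓ_{2,1}-regularized least squares objective F(X) = (1/2)‖A X − Y‖_F² + ϱ √M Σ_{i=1}^K ‖X_{i,:}‖₂. Define γ* ∈ ℝ_+^K by γ*_i = ‖X*_{i,:}‖₂ / √M. Then γ* is a global minimizer over the nonnegative orthant ℝ_+^K of the convex function g(γ) = Σ_{k=1}^K γ_k + tr( (A diag(γ) A^H + ϱ I_D)^{-1} Σ̂_y ). -/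
open Matrix

/-- The `ℓ_{2,1}`-regularized least squares objective
`F(X) = (1/2)‖A X − Y‖_F² + ϱ √M Σ_i ‖X_{i,:}‖₂`. -/
noncomputable def l21Obj {D K M : ℕ} (ϱ : ℝ) (A : Matrix (Fin D) (Fin K) ℂ)
    (Y : Matrix (Fin D) (Fin M) ℂ) (X : Matrix (Fin K) (Fin M) ℂ) : ℝ :=
  (1 / 2) * (∑ d, ∑ m, ‖(A * X - Y) d m‖ ^ 2)
    + ϱ * Real.sqrt M * ∑ i, Real.sqrt (∑ j, ‖X i j‖ ^ 2)

/-- The MMV covariance-based cost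
`g(γ) = Σ_k γ_k + tr( (A diag(γ) Aᴴ + ϱ I_D)⁻¹ Σ̂_y )`, `Σ̂_y = (1/M) Y Yᴴ`
(the trace term is real; taken here via its real part). -/
noncomputable def mmvObj {D K M : ℕ} (ϱ : ℝ) (A : Matrix (Fin D) (Fin K) ℂ)
    (Y : Matrix (Fin D) (Fin M) ℂ) (γ : Fin K → ℝ) : ℝ :=
  (∑ k, γ k) + (((A * Matrix.diagonal (fun k => (γ k : ℂ)) * Aᴴ + (ϱ : ℂ) • 1)⁻¹
      * ((M : ℂ)⁻¹ • (Y * Yᴴ))).trace).re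


section Stmt8Aux
open ComplexOrder

lemma restar (z : ℂ) : (star z * z).re = ‖z‖ ^ 2 := by
  simp [mul_comm, Complex.mul_conj, Complex.normSq_eq_norm_sq,
    ← Complex.ofReal_pow]

lemma re_trace_hh {D M : ℕ} (W : Matrix (Fin D) (Fin M) ℂ) :
    ((Wᴴ * W).trace).re = ∑ d, ∑ m, ‖W d m‖ ^ 2 := by
  rw [Finset.sum_comm]
  simp only [Matrix.trace, Matrix.diag, Matrix.mul_apply, Matrix.conjTranspose_apply]
  rw [Complex.re_sum]
  refine Finset.sum_congr rfl fun m _ => ?_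
  rw [Complex.re_sum]
  exact Finset.sum_congr rfl fun d _ => restar _

lemma re_trace_diag {K M : ℕ} (γ : Fin K → ℝ) (V : Matrix (Fin K) (Fin M) ℂ) :
    ((Vᴴ * ((Matrix.diagonal fun k => (γ k : ℂ)) * V)).trace).re
      = ∑ i, γ i * ∑ j, ‖V i j‖ ^ 2 := by
  have : ((Vᴴ * ((Matrix.diagonal fun k => (γ k : ℂ)) * V)).trace).re
      = ∑ m, ∑ k, γ k * ‖V k m‖ ^ 2 := by
    simp only [Matrix.trace, Matrix.diag, Matrix.mul_apply, Matrix.conjTranspose_apply,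
      Matrix.diagonal_apply, ite_mul, zero_mul, Finset.sum_ite_eq, Finset.mem_univ, if_true]
    rw [Complex.re_sum]
    refine Finset.sum_congr rfl fun m _ => ?_
    rw [Complex.re_sum]
    refine Finset.sum_congr rfl fun k _ => ?_
    have h : star (V k m) * ((γ k : ℂ) * V k m) = (γ k : ℂ) * (star (V k m) * V k m) := by ring
    rw [h, Complex.re_ofReal_mul, restar]
  rw [this, Finset.sum_comm]
  exact Finset.sum_congr rfl fun i _ => (Finset.mul_sum _ _ _).symm

lemma re_trace_cross {K M : ℕ} (X V : Matrix (Fin K) (Fin M) ℂ) :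
    ((Xᴴ * V).trace + (Vᴴ * X).trace).re = 2 * ∑ i, ∑ j, (star (X i j) * V i j).re := by
  have h : Vᴴ * X = (Xᴴ * V)ᴴ := by
    rw [Matrix.conjTranspose_mul, Matrix.conjTranspose_conjTranspose]
  rw [h, Matrix.trace_conjTranspose]
  have h2 : ((Xᴴ * V).trace + star (Xᴴ * V).trace).re = 2 * ((Xᴴ * V).trace).re := by
    simp [Complex.add_re]; ring
  rw [h2]
  congr 1
  have : ((Xᴴ * V).trace).re = ∑ m, ∑ k, (star (X k m) * V k m).re := by
    simp only [Matrix.trace, Matrix.diag, Matrix.mul_apply, Matrix.conjTranspose_apply]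
    rw [Complex.re_sum]
    exact Finset.sum_congr rfl fun m _ => Complex.re_sum _ _
  rw [this, Finset.sum_comm]

lemma trace_identity {D K M : ℕ} (ϱ : ℝ) (A : Matrix (Fin D) (Fin K) ℂ)
    (Γ : Matrix (Fin K) (Fin K) ℂ) (Z Y : Matrix (Fin D) (Fin M) ℂ)
    (V X : Matrix (Fin K) (Fin M) ℂ)
    (hV : V = Aᴴ * Z) (hΓ : Γᴴ = Γ) (hY : Y = A * (Γ * V) + (ϱ : ℂ) • Z) :
    ((A * X - Y)ᴴ * (A * X - Y)).trace
      = (ϱ : ℂ) * (Zᴴ * Y).trace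
        + ((A * (X - Γ * V))ᴴ * (A * (X - Γ * V))).trace
        + (ϱ : ℂ) * ((Vᴴ * (Γ * V)).trace - (Xᴴ * V).trace - (Vᴴ * X).trace) := by
  have hsΓ : star (ϱ : ℂ) = (ϱ : ℂ) := by simp
  set E := X - Γ * V with hE
  have hW : A * X - Y = A * E - (ϱ : ℂ) • Z := by
    rw [hY, hE, Matrix.mul_sub]; abel
  have hZA : Zᴴ * A = Vᴴ := by
    rw [hV, Matrix.conjTranspose_mul, Matrix.conjTranspose_conjTranspose]
  have hGVV : ((Γ * V)ᴴ * V).trace = (Vᴴ * (Γ * V)).trace := by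
    rw [Matrix.conjTranspose_mul, hΓ, Matrix.mul_assoc, Matrix.trace_mul_comm,
      Matrix.mul_assoc]
  have e2 : ((A * E)ᴴ * ((ϱ : ℂ) • Z)).trace
      = (ϱ : ℂ) * ((Xᴴ * V).trace - (Vᴴ * (Γ * V)).trace) := by
    rw [Matrix.mul_smul, Matrix.trace_smul, smul_eq_mul]
    congr 1
    rw [Matrix.conjTranspose_mul, Matrix.mul_assoc, ← hV, hE, Matrix.conjTranspose_sub,
      Matrix.sub_mul, Matrix.trace_sub, hGVV]
  have e3 : (((ϱ : ℂ) • Z)ᴴ * (A * E)).trace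
      = (ϱ : ℂ) * ((Vᴴ * X).trace - (Vᴴ * (Γ * V)).trace) := by
    rw [Matrix.conjTranspose_smul, hsΓ, Matrix.smul_mul, Matrix.trace_smul, smul_eq_mul]
    congr 1
    rw [← Matrix.mul_assoc, hZA, hE, Matrix.mul_sub, Matrix.trace_sub]
  have e4 : (((ϱ : ℂ) • Z)ᴴ * ((ϱ : ℂ) • Z)).trace = (ϱ : ℂ) * ((ϱ : ℂ) * (Zᴴ * Z).trace) := by
    rw [Matrix.conjTranspose_smul, hsΓ, Matrix.smul_mul, Matrix.mul_smul, Matrix.trace_smul,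
      Matrix.trace_smul, smul_eq_mul, smul_eq_mul]
  have e5 : (Zᴴ * Y).trace = (Vᴴ * (Γ * V)).trace + (ϱ : ℂ) * (Zᴴ * Z).trace := by
    rw [hY, Matrix.mul_add, Matrix.trace_add, ← Matrix.mul_assoc, hZA, Matrix.mul_smul,
      Matrix.trace_smul, smul_eq_mul]
  have h1 : ∀ P Q : Matrix (Fin D) (Fin M) ℂ, (P - Q)ᴴ * (P - Q)
      = Pᴴ * P - Pᴴ * Q - Qᴴ * P + Qᴴ * Q := by
    intro P Q
    rw [Matrix.conjTranspose_sub, Matrix.sub_mul, Matrix.mul_sub, Matrix.mul_sub]; abel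
  rw [hW, h1 (A * E) ((ϱ : ℂ) • Z), Matrix.trace_add, Matrix.trace_sub, Matrix.trace_sub, e2, e3, e4, e5]
  ring

lemma identity_real {D K M : ℕ} (ϱ : ℝ) (hϱ : 0 < ϱ) (A : Matrix (Fin D) (Fin K) ℂ)
    (Y : Matrix (Fin D) (Fin M) ℂ) (γ : Fin K → ℝ) (hγ : ∀ k, 0 ≤ γ k) :
    ∃ V : Matrix (Fin K) (Fin M) ℂ,
      ∀ X : Matrix (Fin K) (Fin M) ℂ,
        ((A * X - Y)ᴴ * (A * X - Y)).trace
          = (ϱ : ℂ) * ((A * Matrix.diagonal (fun k => (γ k : ℂ)) * Aᴴ + (ϱ : ℂ) • 1)⁻¹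
                * (Y * Yᴴ)).trace
            + ((A * (X - Matrix.diagonal (fun k => (γ k : ℂ)) * V))ᴴ
                * (A * (X - Matrix.diagonal (fun k => (γ k : ℂ)) * V))).trace
            + (ϱ : ℂ) * (((Vᴴ * (Matrix.diagonal (fun k => (γ k : ℂ)) * V)).trace)
                - (Xᴴ * V).trace - (Vᴴ * X).trace) := by
  set Γ : Matrix (Fin K) (Fin K) ℂ := Matrix.diagonal (fun k => (γ k : ℂ)) with hΓdef
  set B : Matrix (Fin D) (Fin D) ℂ := A * Γ * Aᴴ + (ϱ : ℂ) • 1 with hBdef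
  have hΓps : Γ.PosSemidef := by
    rw [hΓdef]
    exact Matrix.posSemidef_diagonal_iff.mpr fun i => by
      simpa using hγ i
  have hI : ((ϱ : ℂ) • (1 : Matrix (Fin D) (Fin D) ℂ)).PosDef := by
    rw [Matrix.smul_one_eq_diagonal]
    exact Matrix.posDef_diagonal_iff.mpr fun i => by simpa using hϱ
  have hBpd : B.PosDef := Matrix.PosDef.posSemidef_add
    (hΓps.mul_mul_conjTranspose_same A) hI
  have hdet : IsUnit B.det := (Matrix.isUnit_iff_isUnit_det B).mp hBpd.isUnit
  set Z : Matrix (Fin D) (Fin M) ℂ := B⁻¹ * Y with hZdef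
  set V : Matrix (Fin K) (Fin M) ℂ := Aᴴ * Z with hVdef
  have hBZ : B * Z = Y := by
    rw [hZdef, ← Matrix.mul_assoc, Matrix.mul_nonsing_inv _ hdet, Matrix.one_mul]
  have hBh : Bᴴ = B := hBpd.isHermitian
  have hY : Y = A * (Γ * V) + (ϱ : ℂ) • Z := by
    conv_lhs => rw [← hBZ]
    rw [hBdef, Matrix.add_mul, Matrix.smul_mul, Matrix.one_mul, Matrix.mul_assoc,
      Matrix.mul_assoc, ← hVdef]
  have hTr : (B⁻¹ * (Y * Yᴴ)).trace = (Zᴴ * Y).trace := by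
    have h1 : Zᴴ = Yᴴ * B⁻¹ := by
      rw [hZdef, Matrix.conjTranspose_mul, Matrix.conjTranspose_nonsing_inv, hBh]
    calc (B⁻¹ * (Y * Yᴴ)).trace = ((B⁻¹ * Y) * Yᴴ).trace := by rw [Matrix.mul_assoc]
      _ = (Yᴴ * (B⁻¹ * Y)).trace := Matrix.trace_mul_comm _ _
      _ = (Zᴴ * Y).trace := by rw [h1, Matrix.mul_assoc]
  have hΓh : Γᴴ = Γ := by
    rw [hΓdef]
    ext k l
    rcases eq_or_ne k l with h | h
    · subst h; simp [Matrix.conjTranspose_apply, Matrix.diagonal_apply, Complex.conj_ofReal]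
    · simp [Matrix.conjTranspose_apply, Matrix.diagonal_apply, h, Ne.symm h]
  refine ⟨V, fun X => ?_⟩
  rw [hTr]
  exact trace_identity ϱ A Γ Z Y V X hVdef hΓh hY

section Helpers
lemma row_cs {M : ℕ} (x v : Fin M → ℂ) :
    ∑ j, (star (x j) * v j).re
      ≤ Real.sqrt (∑ j, ‖x j‖ ^ 2) * Real.sqrt (∑ j, ‖v j‖ ^ 2) := by
  calc ∑ j, (star (x j) * v j).re ≤ ∑ j, ‖x j‖ * ‖v j‖ := by
        refine Finset.sum_le_sum fun j _ => ?_
        calc (star (x j) * v j).re ≤ ‖star (x j) * v j‖ := Complex.re_le_norm _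
          _ = ‖x j‖ * ‖v j‖ := by
              rw [norm_mul, norm_star]
    _ ≤ _ := Real.sum_mul_le_sqrt_mul_sqrt _ _ _
end Helpers

lemma identity_real' {D K M : ℕ} (ϱ : ℝ) (hϱ : 0 < ϱ) (A : Matrix (Fin D) (Fin K) ℂ)
    (Y : Matrix (Fin D) (Fin M) ℂ) (γ : Fin K → ℝ) (hγ : ∀ k, 0 ≤ γ k) :
    ∃ V : Matrix (Fin K) (Fin M) ℂ,
      ∀ X : Matrix (Fin K) (Fin M) ℂ,
        (∑ d, ∑ m, ‖(A * X - Y) d m‖ ^ 2)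
          = ϱ * (((A * Matrix.diagonal (fun k => (γ k : ℂ)) * Aᴴ + (ϱ : ℂ) • 1)⁻¹
                * (Y * Yᴴ)).trace).re
            + (∑ d, ∑ m, ‖(A * (X - Matrix.diagonal (fun k => (γ k : ℂ)) * V)) d m‖ ^ 2)
            + ϱ * ((∑ i, γ i * ∑ j, ‖V i j‖ ^ 2)
                - 2 * ∑ i, ∑ j, (star (X i j) * V i j).re) := by
  obtain ⟨V, hid⟩ := identity_real ϱ hϱ A Y γ hγ
  refine ⟨V, fun X => ?_⟩
  have h := congrArg Complex.re (hid X)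
  simp only [Complex.add_re, Complex.sub_re, Complex.re_ofReal_mul] at h
  rw [re_trace_hh, re_trace_hh, re_trace_diag] at h
  have hcross := re_trace_cross X V
  rw [Complex.add_re] at hcross
  linear_combination h - ϱ * hcross

lemma mmv_eq {D K M : ℕ} (ϱ : ℝ) (A : Matrix (Fin D) (Fin K) ℂ)
    (Y : Matrix (Fin D) (Fin M) ℂ) (γ : Fin K → ℝ) :
    mmvObj ϱ A Y γ = (∑ k, γ k)
      + (M : ℝ)⁻¹ * (((A * Matrix.diagonal (fun k => (γ k : ℂ)) * Aᴴ + (ϱ : ℂ) • 1)⁻¹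
          * (Y * Yᴴ)).trace).re := by
  unfold mmvObj
  congr 1
  rw [Matrix.mul_smul, Matrix.trace_smul, smul_eq_mul,
    show ((M : ℂ)⁻¹) = (((M : ℝ)⁻¹ : ℝ) : ℂ) by push_cast; ring, Complex.re_ofReal_mul]

lemma stepA {D K M : ℕ} (hM : 0 < M) (ϱ : ℝ) (hϱ : 0 < ϱ) (A : Matrix (Fin D) (Fin K) ℂ)
    (Y : Matrix (Fin D) (Fin M) ℂ) (Xstar : Matrix (Fin K) (Fin M) ℂ)
    (γstar : Fin K → ℝ)
    (hγdef : ∀ i, γstar i = Real.sqrt (∑ j, ‖Xstar i j‖ ^ 2) / Real.sqrt M) :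
    ϱ * M / 2 * mmvObj ϱ A Y γstar ≤ l21Obj ϱ A Y Xstar := by
  have hsM : (0 : ℝ) < Real.sqrt M := Real.sqrt_pos.mpr (by exact_mod_cast hM)
  have hsM2 : Real.sqrt M * Real.sqrt M = (M : ℝ) := Real.mul_self_sqrt (by positivity)
  have hγ0 : ∀ i, 0 ≤ γstar i := fun i => by rw [hγdef i]; positivity
  obtain ⟨V, hid⟩ := identity_real' ϱ hϱ A Y γstar hγ0
  have hX := hid Xstar
  -- notation
  set T : ℝ := (((A * Matrix.diagonal (fun k => (γstar k : ℂ)) * Aᴴ + (ϱ : ℂ) • 1)⁻¹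
      * (Y * Yᴴ)).trace).re with hT
  set n : Fin K → ℝ := fun i => Real.sqrt (∑ j, ‖Xstar i j‖ ^ 2) with hn
  set w : Fin K → ℝ := fun i => Real.sqrt (∑ j, ‖V i j‖ ^ 2) with hw
  have hn0 : ∀ i, 0 ≤ n i := fun i => Real.sqrt_nonneg _
  have hw0 : ∀ i, 0 ≤ w i := fun i => Real.sqrt_nonneg _
  have hw2 : ∀ i, w i ^ 2 = ∑ j, ‖V i j‖ ^ 2 := fun i =>
    Real.sq_sqrt (by positivity)
  have hnγ : ∀ i, n i = γstar i * Real.sqrt M := fun i => by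
    rw [hγdef i, div_mul_cancel₀ _ hsM.ne']
  -- per-row bound
  have hrow : ∀ i, 2 * ∑ j, (star (Xstar i j) * V i j).re
      ≤ Real.sqrt M * n i + γstar i * ∑ j, ‖V i j‖ ^ 2 := by
    intro i
    have hcs : ∑ j, (star (Xstar i j) * V i j).re ≤ n i * w i := row_cs _ _
    have hcs' : ∑ j, (star (Xstar i j) * V i j).re ≤ γstar i * Real.sqrt M * w i := by
      rw [← hnγ i]; exact hcs
    rw [← hw2 i, hnγ i]
    nlinarith [mul_nonneg (hγ0 i) (sq_nonneg (Real.sqrt M - w i)), hcs', hsM2]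
  have hsumrow : 2 * ∑ i, ∑ j, (star (Xstar i j) * V i j).re
      ≤ Real.sqrt M * ∑ i, n i + ∑ i, γstar i * ∑ j, ‖V i j‖ ^ 2 := by
    rw [Finset.mul_sum, Finset.mul_sum]
    rw [← Finset.sum_add_distrib]
    exact Finset.sum_le_sum fun i _ => hrow i
  have hqE : 0 ≤ ∑ d, ∑ m,
      ‖(A * (Xstar - Matrix.diagonal (fun k => (γstar k : ℂ)) * V)) d m‖ ^ 2 := by positivity
  have hmul : ϱ * (2 * ∑ i, ∑ j, (star (Xstar i j) * V i j).re)
      ≤ ϱ * (Real.sqrt M * ∑ i, n i + ∑ i, γstar i * ∑ j, ‖V i j‖ ^ 2) :=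
    mul_le_mul_of_nonneg_left hsumrow hϱ.le
  have hkey : ϱ * T ≤ (∑ d, ∑ m, ‖(A * Xstar - Y) d m‖ ^ 2)
      + ϱ * (Real.sqrt M * ∑ i, n i) := by linarith [hX, hqE, hmul]
  -- assemble
  rw [mmv_eq, ← hT]
  unfold l21Obj
  have hSg : ∑ k, γstar k = (∑ i, n i) / Real.sqrt M := by
    rw [Finset.sum_div]
    exact Finset.sum_congr rfl fun i _ => by rw [hγdef i]
  have hMdiv : (M : ℝ) * ((∑ i, n i) / Real.sqrt M) = Real.sqrt M * ∑ i, n i := by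
    calc (M : ℝ) * ((∑ i, n i) / Real.sqrt M) = ((M : ℝ) / Real.sqrt M) * ∑ i, n i := by ring
      _ = Real.sqrt M * ∑ i, n i := by rw [Real.div_sqrt]
  have hMT : ϱ * M / 2 * ((M : ℝ)⁻¹ * T) = ϱ / 2 * T := by
    field_simp
  have hN0 : 0 ≤ ∑ i, n i := Finset.sum_nonneg fun i _ => hn0 i
  calc ϱ * M / 2 * ((∑ k, γstar k) + (M : ℝ)⁻¹ * T)
      = ϱ * M / 2 * (∑ k, γstar k) + ϱ / 2 * T := by rw [mul_add, hMT]
    _ = ϱ / 2 * (Real.sqrt M * ∑ i, n i) + ϱ / 2 * T := by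
        rw [hSg]; rw [← hMdiv]; ring
    _ ≤ ϱ / 2 * (Real.sqrt M * ∑ i, n i)
        + ((1 / 2) * (∑ d, ∑ m, ‖(A * Xstar - Y) d m‖ ^ 2)
          + ϱ / 2 * (Real.sqrt M * ∑ i, n i)) := by linarith [hkey]
    _ = (1 / 2) * (∑ d, ∑ m, ‖(A * Xstar - Y) d m‖ ^ 2)
        + ϱ * Real.sqrt M * ∑ i, n i := by ring

lemma stepB {D K M : ℕ} (hM : 0 < M) (ϱ : ℝ) (hϱ : 0 < ϱ) (A : Matrix (Fin D) (Fin K) ℂ)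
    (Y : Matrix (Fin D) (Fin M) ℂ) (γ : Fin K → ℝ) (hγ : ∀ k, 0 ≤ γ k) :
    ∃ Xh : Matrix (Fin K) (Fin M) ℂ,
      l21Obj ϱ A Y Xh ≤ ϱ * M / 2 * mmvObj ϱ A Y γ := by
  have hsM : (0 : ℝ) < Real.sqrt M := Real.sqrt_pos.mpr (by exact_mod_cast hM)
  have hsM2 : Real.sqrt M * Real.sqrt M = (M : ℝ) := Real.mul_self_sqrt (by positivity)
  obtain ⟨V, hid⟩ := identity_real' ϱ hϱ A Y γ hγ
  set Γ : Matrix (Fin K) (Fin K) ℂ := Matrix.diagonal (fun k => (γ k : ℂ)) with hΓ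
  refine ⟨Γ * V, ?_⟩
  have hXh := hid (Γ * V)
  set T : ℝ := (((A * Γ * Aᴴ + (ϱ : ℂ) • 1)⁻¹ * (Y * Yᴴ)).trace).re with hT
  have hentry : ∀ i j, (Γ * V) i j = (γ i : ℂ) * V i j := fun i j => by
    rw [hΓ, Matrix.diagonal_mul]
  -- middle term vanishes
  have hmid : (∑ d, ∑ m, ‖(A * ((Γ * V) - Γ * V)) d m‖ ^ 2) = 0 := by
    simp
  -- cross term
  have hcross : ∀ i, ∑ j, (star ((Γ * V) i j) * V i j).re = γ i * ∑ j, ‖V i j‖ ^ 2 := by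
    intro i
    rw [Finset.mul_sum]
    refine Finset.sum_congr rfl fun j _ => ?_
    rw [hentry i j]
    have h : star ((γ i : ℂ) * V i j) * V i j = (γ i : ℂ) * (star (V i j) * V i j) := by
      rw [star_mul']
      rw [show star ((γ i : ℂ)) = (γ i : ℂ) from Complex.conj_ofReal _]
      ring
    rw [h, Complex.re_ofReal_mul, restar]
  have hcross' : ∑ i, ∑ j, (star ((Γ * V) i j) * V i j).re
      = ∑ i, γ i * ∑ j, ‖V i j‖ ^ 2 :=
    Finset.sum_congr rfl fun i _ => hcross i
  -- row norms
  have hrownorm : ∀ i, Real.sqrt (∑ j, ‖(Γ * V) i j‖ ^ 2)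
      = γ i * Real.sqrt (∑ j, ‖V i j‖ ^ 2) := by
    intro i
    have h : (∑ j, ‖(Γ * V) i j‖ ^ 2) = γ i ^ 2 * ∑ j, ‖V i j‖ ^ 2 := by
      rw [Finset.mul_sum]
      refine Finset.sum_congr rfl fun j _ => ?_
      rw [hentry i j, norm_mul, Complex.norm_real, Real.norm_eq_abs, abs_of_nonneg (hγ i)]
      ring
    rw [h, Real.sqrt_mul (sq_nonneg _), Real.sqrt_sq (hγ i)]
  have hw2 : ∀ i, (Real.sqrt (∑ j, ‖V i j‖ ^ 2)) ^ 2 = ∑ j, ‖V i j‖ ^ 2 := fun i =>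
    Real.sq_sqrt (by positivity)
  have hq : (∑ d, ∑ m, ‖(A * (Γ * V) - Y) d m‖ ^ 2)
      = ϱ * T - ϱ * ∑ i, γ i * ∑ j, ‖V i j‖ ^ 2 := by
    rw [hXh, hmid, hcross']; ring
  have hrow : ∀ i, Real.sqrt M * (γ i * Real.sqrt (∑ j, ‖V i j‖ ^ 2))
      ≤ ((M : ℝ) * γ i + γ i * ∑ j, ‖V i j‖ ^ 2) / 2 := by
    intro i
    have h := mul_nonneg (hγ i)
      (sq_nonneg (Real.sqrt M - Real.sqrt (∑ j, ‖V i j‖ ^ 2)))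
    have h3 : γ i * (Real.sqrt M * Real.sqrt M) = γ i * M := by rw [hsM2]
    have h4 : γ i * (Real.sqrt (∑ j, ‖V i j‖ ^ 2)) ^ 2
        = γ i * ∑ j, ‖V i j‖ ^ 2 := by rw [hw2 i]
    nlinarith [h, h3, h4]
  have hsum : Real.sqrt M * ∑ i, γ i * Real.sqrt (∑ j, ‖V i j‖ ^ 2)
      ≤ ((M : ℝ) * ∑ i, γ i + ∑ i, γ i * ∑ j, ‖V i j‖ ^ 2) / 2 := by
    rw [Finset.mul_sum]
    calc ∑ i, Real.sqrt M * (γ i * Real.sqrt (∑ j, ‖V i j‖ ^ 2))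
        ≤ ∑ i, ((M : ℝ) * γ i + γ i * ∑ j, ‖V i j‖ ^ 2) / 2 :=
          Finset.sum_le_sum fun i _ => hrow i
      _ = ((M : ℝ) * ∑ i, γ i + ∑ i, γ i * ∑ j, ‖V i j‖ ^ 2) / 2 := by
          rw [Finset.mul_sum, ← Finset.sum_add_distrib, ← Finset.sum_div]
  have hmul := mul_le_mul_of_nonneg_left hsum hϱ.le
  rw [mmv_eq, ← hΓ, ← hT]
  unfold l21Obj
  have hMT : ϱ * M / 2 * ((M : ℝ)⁻¹ * T) = ϱ / 2 * T := by field_simp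
  have hrn : ∑ i, Real.sqrt (∑ j, ‖(Γ * V) i j‖ ^ 2)
      = ∑ i, γ i * Real.sqrt (∑ j, ‖V i j‖ ^ 2) :=
    Finset.sum_congr rfl fun i _ => hrownorm i
  rw [hq, hrn, mul_add, hMT]
  linarith [hmul]

end Stmt8Aux

/-- If `X*` globally minimizes the `ℓ_{2,1}`-regularized least squares
objective, then `γ*` with `γ*_i = ‖X*_{i,:}‖₂ / √M` globally minimizes the convex MMV
cost `g` over the nonnegative orthant. -/
theorem stmt_8 {D K M : ℕ} (hD : 0 < D) (hK : 0 < K) (hM : 0 < M)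
    (ϱ : ℝ) (hϱ : 0 < ϱ) (A : Matrix (Fin D) (Fin K) ℂ)
    (Y : Matrix (Fin D) (Fin M) ℂ) (Xstar : Matrix (Fin K) (Fin M) ℂ)
    (hXstar : ∀ X : Matrix (Fin K) (Fin M) ℂ, l21Obj ϱ A Y Xstar ≤ l21Obj ϱ A Y X)
    (γstar : Fin K → ℝ)
    (hγdef : ∀ i, γstar i = Real.sqrt (∑ j, ‖Xstar i j‖ ^ 2) / Real.sqrt M) :
    (∀ i, 0 ≤ γstar i) ∧
      ∀ γ : Fin K → ℝ, (∀ k, 0 ≤ γ k) → mmvObj ϱ A Y γstar ≤ mmvObj ϱ A Y γ := by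
  have hγ0 : ∀ i, 0 ≤ γstar i := fun i => by rw [hγdef i]; positivity
  refine ⟨hγ0, fun γ hγ => ?_⟩
  have h1 := stepA hM ϱ hϱ A Y Xstar γstar hγdef
  obtain ⟨Xh, h2⟩ := stepB hM ϱ hϱ A Y γ hγ
  have h3 : ϱ * M / 2 * mmvObj ϱ A Y γstar ≤ ϱ * M / 2 * mmvObj ϱ A Y γ :=
    le_trans h1 (le_trans (hXstar Xh) h2)
  have hM' : (0 : ℝ) < (M : ℝ) := by exact_mod_cast hM
  have hc : (0 : ℝ) < ϱ * M / 2 := by positivity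
  exact le_of_mul_le_mul_left h3 hc
end

section
/- Fix a positive integer D, σ² > 0, pilot vectors a_1,…,a_K ∈ ℂ^D, a Hermitian positive semidefinite D×D matrix Σ̂, and γ ∈ ℝ_+^K. Let Σ = Σ_{j=1}^K γ_j a_j a_j^H + σ² I_D (Hermitian positive definite), and define f(γ) = log det Σ(γ) + tr(Σ(γ)^{-1} Σ̂) where Σ(γ) is this matrix as a function of γ. Fix an index k and set q = a_k^H Σ^{-1} a_k (a positive real number) and r = a_k^H Σ^{-1} Σ̂ Σ^{-1} a_k (a nonnegative real number). Then for every real d with d > −1/q, the matrix Σ + d a_k a_k^H is invertible and f(γ + d e_k) − f(γ) = log(1 + d q) − (r d)/(1 + d q), where e_k is the k-th standard basis vector of ℝ^K. -/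
open Matrix
open scoped ComplexOrder

/-- The model covariance matrix `Σ(γ) = Σ_j γ_j a_j a_jᴴ + σ² I_D`. -/
noncomputable def covMat {D K : ℕ} (a : Fin K → Fin D → ℂ) (σsq : ℝ)
    (γ : Fin K → ℝ) : Matrix (Fin D) (Fin D) ℂ :=
  (∑ j, (γ j : ℂ) • vecMulVec (a j) (star (a j))) + (σsq : ℂ) • 1

/-- The ML cost `f(γ) = log det Σ(γ) + tr(Σ(γ)⁻¹ Σ̂)` (both summands are real). -/
noncomputable def mlCost {D K : ℕ} (a : Fin K → Fin D → ℂ) (σsq : ℝ)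
    (Shat : Matrix (Fin D) (Fin D) ℂ) (γ : Fin K → ℝ) : ℝ :=
  Real.log ((covMat a σsq γ).det.re) + ((covMat a σsq γ)⁻¹ * Shat).trace.re

namespace Stmt10Aux

variable {D : ℕ}

lemma smul_vecMulVec (c : ℂ) (u v : Fin D → ℂ) :
    c • vecMulVec u v = vecMulVec (c • u) v := by
  ext i j
  simp [vecMulVec_apply, mul_assoc]

lemma vecMulVec_smul_right (c : ℂ) (u v : Fin D → ℂ) :
    vecMulVec u (c • v) = c • vecMulVec u v := by
  ext i j
  simp [vecMulVec_apply, mul_assoc, mul_comm, mul_left_comm]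

lemma mul_vecMulVec (A : Matrix (Fin D) (Fin D) ℂ) (u v : Fin D → ℂ) :
    A * vecMulVec u v = vecMulVec (A *ᵥ u) v := by
  ext i j
  simp only [Matrix.mul_apply, vecMulVec_apply, mulVec, dotProduct]
  rw [Finset.sum_mul]
  exact Finset.sum_congr rfl fun l _ => by ring

lemma vecMulVec_mul (u v : Fin D → ℂ) (A : Matrix (Fin D) (Fin D) ℂ) :
    vecMulVec u v * A = vecMulVec u (v ᵥ* A) := by
  ext i j
  simp [Matrix.mul_apply, vecMulVec_apply, vecMul, dotProduct, Finset.mul_sum, mul_assoc]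

lemma vecMul_vecMulVec (v u x : Fin D → ℂ) :
    v ᵥ* vecMulVec u x = (v ⬝ᵥ u) • x := by
  funext j
  simp [vecMul, vecMulVec_apply, dotProduct, Finset.sum_mul, mul_assoc]

lemma trace_vecMulVec_mul (u v : Fin D → ℂ) (S : Matrix (Fin D) (Fin D) ℂ) :
    (vecMulVec u v * S).trace = v ⬝ᵥ (S *ᵥ u) := by
  simp only [Matrix.trace, Matrix.diag, Matrix.mul_apply, vecMulVec_apply, dotProduct, mulVec,
    Finset.mul_sum]
  rw [Finset.sum_comm]
  exact Finset.sum_congr rfl fun j _ => Finset.sum_congr rfl fun i _ => by ring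

lemma psd_real_smul {M : Matrix (Fin D) (Fin D) ℂ} (hM : M.PosSemidef) {c : ℝ} (hc : 0 ≤ c) :
    ((c : ℂ) • M).PosSemidef := by
  refine Matrix.posSemidef_iff_dotProduct_mulVec.mpr ⟨?_, ?_⟩
  · have h := hM.isHermitian
    unfold Matrix.IsHermitian at *
    rw [Matrix.conjTranspose_smul, h]
    simp [Complex.star_def, Complex.conj_ofReal]
  · intro x
    rw [Matrix.smul_mulVec, dotProduct_smul, smul_eq_mul]
    exact mul_nonneg (by exact_mod_cast hc) (hM.dotProduct_mulVec_nonneg x)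

lemma psd_vecMulVec (u : Fin D → ℂ) : (vecMulVec u (star u)).PosSemidef := by
  have h : vecMulVec u (star u) = replicateCol Unit u * (replicateCol Unit u)ᴴ := by
    rw [Matrix.conjTranspose_replicateCol, ← Matrix.vecMulVec_eq]
  rw [h]
  exact Matrix.posSemidef_self_mul_conjTranspose _

lemma covMat_posDef {K : ℕ} (a : Fin K → Fin D → ℂ) {σsq : ℝ} {γ : Fin K → ℝ}
    (hσ : 0 < σsq) (hγ : ∀ j, 0 ≤ γ j) : (covMat a σsq γ).PosDef := by
  unfold covMat
  refine Matrix.PosDef.posSemidef_add ?_ ?_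
  · refine Finset.sum_induction _ Matrix.PosSemidef
      (fun A B hA hB => hA.add hB) Matrix.PosSemidef.zero fun j _ => ?_
    exact psd_real_smul (psd_vecMulVec (a j)) (hγ j)
  · rw [Matrix.smul_one_eq_diagonal]
    refine Matrix.posDef_diagonal_iff.mpr fun i => ?_
    exact_mod_cast hσ

end Stmt10Aux

/-- rank-one coordinate update of the ML cost. With
`q = a_kᴴ Σ⁻¹ a_k > 0` and `r = a_kᴴ Σ⁻¹ Σ̂ Σ⁻¹ a_k ≥ 0`, for every real `d > −1/q` the
matrix `Σ + d a_k a_kᴴ` is invertible and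
`f(γ + d e_k) − f(γ) = log(1 + d q) − r d/(1 + d q)`. -/
theorem stmt_10 {D K : ℕ} (σsq : ℝ) (hσ : 0 < σsq)
    (a : Fin K → Fin D → ℂ)
    (Shat : Matrix (Fin D) (Fin D) ℂ) (hShat : Shat.PosSemidef)
    (γ : Fin K → ℝ) (hγ : ∀ j, 0 ≤ γ j) (k : Fin K)
    (q r : ℝ)
    (hq : (q : ℂ) = star (a k) ⬝ᵥ ((covMat a σsq γ)⁻¹ *ᵥ a k))
    (hqpos : 0 < q) (hrnn : 0 ≤ r)
    (hr : (r : ℂ) = star (a k) ⬝ᵥ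
      ((covMat a σsq γ)⁻¹ *ᵥ (Shat *ᵥ ((covMat a σsq γ)⁻¹ *ᵥ a k))))
    (d : ℝ) (hd : -1 / q < d) :
    IsUnit ((covMat a σsq γ) + (d : ℂ) • vecMulVec (a k) (star (a k))).det
    ∧ mlCost a σsq Shat (γ + d • ((Pi.single k 1 : Fin K → ℝ))) - mlCost a σsq Shat γ
        = Real.log (1 + d * q) - r * d / (1 + d * q) := by
  classical
  set S0 := covMat a σsq γ with hS0
  have hSpd : S0.PosDef := Stmt10Aux.covMat_posDef a hσ hγ
  have hSdetU : IsUnit S0.det := (Matrix.isUnit_iff_isUnit_det _).mp hSpd.isUnit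
  set u := a k with hu
  have hden : 0 < 1 + d * q := by
    have h1 : -1 < d * q := by
      have := (div_lt_iff₀ hqpos).mp hd
      linarith
    linarith
  have hdenne : (1 + d * q) ≠ 0 := ne_of_gt hden
  have hdenneC : ((1 + d * q : ℝ) : ℂ) ≠ 0 := by exact_mod_cast hdenne
  -- the new covariance matrix
  have hcov' : covMat a σsq (γ + d • (Pi.single k 1 : Fin K → ℝ))
      = S0 + (d : ℂ) • vecMulVec u (star u) := by
    unfold covMat
    rw [hS0]
    unfold covMat
    have hsum : (∑ j, (((γ + d • (Pi.single k 1 : Fin K → ℝ)) j : ℝ) : ℂ) •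
        vecMulVec (a j) (star (a j)))
        = (∑ j, ((γ j : ℝ) : ℂ) • vecMulVec (a j) (star (a j)))
          + (d : ℂ) • vecMulVec u (star u) := by
      have h : ∀ j ∈ Finset.univ, (((γ + d • (Pi.single k 1 : Fin K → ℝ)) j : ℝ) : ℂ) •
          vecMulVec (a j) (star (a j))
          = ((γ j : ℝ) : ℂ) • vecMulVec (a j) (star (a j))
            + (if j = k then (d : ℂ) • vecMulVec u (star u) else 0) := by
        intro j _
        by_cases h : j = k
        · subst h
          simp [Pi.single_apply, add_smul, Complex.ofReal_add, hu]
        · simp [Pi.single_apply, h]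
      rw [Finset.sum_congr rfl h, Finset.sum_add_distrib, Finset.sum_ite_eq' Finset.univ k]
      simp
    rw [hsum]
    abel
  -- determinant identity
  have hdet : (S0 + (d : ℂ) • vecMulVec u (star u)).det
      = S0.det * ((1 + d * q : ℝ) : ℂ) := by
    rw [Stmt10Aux.smul_vecMulVec, Matrix.vecMulVec_eq Unit, Matrix.det_add_replicateCol_mul_replicateRow hSdetU]
    congr 1
    rw [Matrix.det_unique, Matrix.mul_assoc, ← Matrix.replicateCol_mulVec]
    simp only [Matrix.add_apply, Matrix.one_apply_eq, Matrix.replicateRow_mul_replicateCol_apply]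
    rw [Matrix.mulVec_smul, dotProduct_smul, ← hq, smul_eq_mul]
    push_cast
    ring
  have hdetSpos : 0 < S0.det := hSpd.det_pos
  have hdetSre : 0 < S0.det.re := (Complex.pos_iff.mp hdetSpos).1
  have hdetSim : S0.det.im = 0 := ((Complex.pos_iff.mp hdetSpos).2).symm
  refine ⟨?_, ?_⟩
  · rw [hdet]
    exact (isUnit_iff_ne_zero.mpr (ne_of_gt hdetSpos)).mul (isUnit_iff_ne_zero.mpr hdenneC)
  -- Sherman–Morrison
  · set w := S0⁻¹ *ᵥ u with hw
    have hSinvH : S0⁻¹.IsHermitian := hSpd.inv.isHermitian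
    have hstarw : star u ᵥ* S0⁻¹ = star w := by
      rw [hw, Matrix.star_mulVec, hSinvH.eq]
    set c := ((d / (1 + d * q) : ℝ) : ℂ) with hc
    have hmulinv : S0 * S0⁻¹ = 1 := Matrix.mul_nonsing_inv _ hSdetU
    have hSw : S0 *ᵥ w = u := by
      rw [hw, Matrix.mulVec_mulVec, hmulinv, Matrix.one_mulVec]
    have hSM : (S0 + (d : ℂ) • vecMulVec u (star u))⁻¹
        = S0⁻¹ - c • vecMulVec w (star w) := by
      apply Matrix.inv_eq_right_inv
      have e1 : S0 * (c • vecMulVec w (star w)) = c • vecMulVec u (star w) := by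
        rw [Matrix.mul_smul, Stmt10Aux.mul_vecMulVec, hSw]
      have e2 : ((d : ℂ) • vecMulVec u (star u)) * S0⁻¹ = (d : ℂ) • vecMulVec u (star w) := by
        rw [Matrix.smul_mul, Stmt10Aux.vecMulVec_mul, hstarw]
      have e3 : ((d : ℂ) • vecMulVec u (star u)) * (c • vecMulVec w (star w))
          = ((d : ℂ) * (c * (q : ℂ))) • vecMulVec u (star w) := by
        rw [Matrix.smul_mul, Matrix.mul_smul, Stmt10Aux.vecMulVec_mul,
          Stmt10Aux.vecMul_vecMulVec, Stmt10Aux.vecMulVec_smul_right, ← hq,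
          smul_smul, smul_smul, mul_assoc]
      rw [Matrix.mul_sub, Matrix.add_mul, Matrix.add_mul, hmulinv, e1, e2, e3]
      have hz : c + (d : ℂ) * (c * (q : ℂ)) = (d : ℂ) := by
        have h1 : (1 + (d : ℂ) * (q : ℂ)) ≠ 0 := by
          have := hdenneC
          push_cast at this
          exact this
        rw [hc]
        push_cast
        field_simp
      rw [← add_smul, hz, add_sub_cancel_right]
    -- trace identity
    have htr : (vecMulVec w (star w) * Shat).trace = (r : ℂ) := by
      rw [Stmt10Aux.trace_vecMulVec_mul, ← hstarw, ← Matrix.dotProduct_mulVec, hr, hw]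
    -- assemble
    have hS'det_re : (S0 + (d : ℂ) • vecMulVec u (star u)).det.re
        = S0.det.re * (1 + d * q) := by
      rw [hdet]
      simp [Complex.mul_re, hdetSim]
    have htrace' : (((S0 + (d : ℂ) • vecMulVec u (star u))⁻¹ * Shat).trace).re
        = ((S0⁻¹ * Shat).trace).re - d / (1 + d * q) * r := by
      rw [hSM, Matrix.sub_mul, Matrix.trace_sub, Matrix.smul_mul, Matrix.trace_smul,
        htr, smul_eq_mul, Complex.sub_re]
      congr 1
      rw [hc]
      rw [← Complex.ofReal_mul]
      exact Complex.ofReal_re _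
    unfold mlCost
    rw [hcov', ← hS0, hS'det_re, htrace']
    rw [mul_comm, Real.log_mul hdenne (ne_of_gt hdetSre)]
    field_simp
    ring
end

section
/- Let q > 0 and r ≥ 0 be real numbers, let φ(d) = log(1 + d q) − (r d)/(1 + d q) on (−1/q, ∞), and let d* = (r − q)/q². Let c ≥ 0 be a real number with c < 1/q. Then the minimum of φ over the interval [−c, ∞) is attained at max{d*, −c}: for all d ≥ −c one has φ(max{d*, −c}) ≤ φ(d). -/
private lemma g_inc (a s t : ℝ) (ha : 0 ≤ a) (has : a ≤ s) (hs : 0 < s) (hst : s ≤ t) :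
    Real.log s + a / s ≤ Real.log t + a / t := by
  have ht : 0 < t := lt_of_lt_of_le hs hst
  have h1 : Real.log (s / t) ≤ s / t - 1 := Real.log_le_sub_one_of_pos (by positivity)
  rw [Real.log_div hs.ne' ht.ne'] at h1
  have h2 : a / s - a / t ≤ 1 - s / t := by
    rw [div_sub_div _ _ hs.ne' ht.ne', div_le_iff₀ (by positivity)]
    have hst' : (1 - s / t) * (s * t) = (t - s) * s := by field_simp
    rw [hst']
    nlinarith [mul_nonneg (sub_nonneg.mpr hst) (sub_nonneg.mpr has)]
  linarith

private lemma g_min (a t : ℝ) (ha : 0 < a) (ht : 0 < t) :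
    Real.log a + a / a ≤ Real.log t + a / t := by
  rw [div_self ha.ne']
  have h1 : Real.log (a / t) ≤ a / t - 1 := Real.log_le_sub_one_of_pos (by positivity)
  rw [Real.log_div ha.ne' ht.ne'] at h1
  linarith

private lemma phi_eq (q r x : ℝ) (hq : 0 < q) (hx : 0 < 1 + x * q) :
    Real.log (1 + x * q) - r * x / (1 + x * q)
      = Real.log (1 + x * q) + (r / q) / (1 + x * q) - r / q := by
  field_simp
  ring

/-- For `q > 0`, `r ≥ 0`, `φ(d) = log(1 + d q) − r d/(1 + d q)`,
`d* = (r − q)/q²`, and `0 ≤ c < 1/q`, the minimum of `φ` over `[−c, ∞)` is attained at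
`max{d*, −c}`. -/
theorem stmt_12 (q r : ℝ) (hq : 0 < q) (hr : 0 ≤ r)
    (c : ℝ) (hc : 0 ≤ c) (hc' : c < 1 / q) :
    ∀ d : ℝ, -c ≤ d →
      Real.log (1 + max ((r - q) / q ^ 2) (-c) * q)
          - r * max ((r - q) / q ^ 2) (-c) / (1 + max ((r - q) / q ^ 2) (-c) * q)
        ≤ Real.log (1 + d * q) - r * d / (1 + d * q) := by
  intro d hd
  have hq2 : (0:ℝ) < q ^ 2 := by positivity
  have hcq : c * q < 1 := by
    have := (lt_div_iff₀ hq).mp hc'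
    linarith
  have ht0 : 0 < 1 - c * q := by linarith
  have htd : 0 < 1 + d * q := by nlinarith
  have hm : -c ≤ max ((r - q) / q ^ 2) (-c) := le_max_right _ _
  have hts : 0 < 1 + max ((r - q) / q ^ 2) (-c) * q := by nlinarith
  rw [phi_eq q r _ hq hts, phi_eq q r d hq htd]
  have key : Real.log (1 + max ((r - q) / q ^ 2) (-c) * q)
      + (r / q) / (1 + max ((r - q) / q ^ 2) (-c) * q)
      ≤ Real.log (1 + d * q) + (r / q) / (1 + d * q) := by
    rcases le_total ((r - q) / q ^ 2) (-c) with h | h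
    · rw [max_eq_right h]
      have hrq : r - q ≤ -c * q ^ 2 := by
        have := (div_le_iff₀ hq2).mp h
        linarith
      have ha : r / q ≤ 1 + -c * q := by
        rw [div_le_iff₀ hq]; nlinarith
      exact g_inc (r / q) _ _ (by positivity) ha (by nlinarith) (by nlinarith)
    · rw [max_eq_left h]
      have hrq : -c * q ^ 2 ≤ r - q := by
        have := (le_div_iff₀ hq2).mp h
        linarith
      have hr' : 0 < r := by nlinarith
      have hs : 1 + (r - q) / q ^ 2 * q = r / q := by field_simp; ring
      rw [hs]
      exact g_min (r / q) _ (by positivity) htd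
  linarith
end

section
/- Let a_1, …, a_K ∈ ℂ^D be vectors with ‖a_k‖₂² = D for every k, let s be a positive integer, and let ρ ∈ (0,1), τ > 0. Suppose the centered measurement map satisfies the ℓ₂-robust null space property of order s: for every v ∈ ℝ^K and every index set S ⊆ {1,…,K} with |S| ≤ s, ‖v_S‖₂ ≤ (ρ/√s) ‖v_{S^c}‖₁ + τ ‖ Σ_{k=1}^K v_k (a_k a_k^H − I_D) ‖_F. Then the uncentered map satisfies the same property with the same parameters: for every v ∈ ℝ^K and every |S| ≤ s, ‖v_S‖₂ ≤ (ρ/√s) ‖v_{S^c}‖₁ + τ ‖ Σ_{k=1}^K v_k a_k a_k^H ‖_F. -/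
open Matrix

/-- Squared Frobenius norm of a complex matrix. -/
noncomputable def frobSq {D : ℕ} (A : Matrix (Fin D) (Fin D) ℂ) : ℝ :=
  ∑ i, ∑ j, ‖A i j‖ ^ 2

lemma key {D K : ℕ} (a : Fin K → Fin D → ℂ)
    (ha : ∀ k, ∑ i, ‖a k i‖ ^ 2 = (D : ℝ)) (v : Fin K → ℝ) :
    frobSq (∑ k, (v k : ℂ) • (vecMulVec (a k) (star (a k)) - 1)) ≤
      frobSq (∑ k, (v k : ℂ) • vecMulVec (a k) (star (a k))) := by
  set c : ℝ := ∑ k, v k with hc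
  set M : Matrix (Fin D) (Fin D) ℂ := ∑ k, (v k : ℂ) • vecMulVec (a k) (star (a k)) with hM
  -- diagonal entries are real
  set m : Fin D → ℝ := fun i => ∑ k, v k * ‖a k i‖ ^ 2 with hm
  have hMdiag : ∀ i, M i i = ((m i : ℝ) : ℂ) := by
    intro i
    rw [hM]
    simp only [Matrix.sum_apply, Matrix.smul_apply, vecMulVec_apply, Pi.star_apply, smul_eq_mul, hm]
    push_cast
    refine Finset.sum_congr rfl fun k _ => ?_
    rw [Complex.star_def, Complex.mul_conj']
  have hN : (∑ k, (v k : ℂ) • (vecMulVec (a k) (star (a k)) - 1))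
      = M - (c : ℂ) • 1 := by
    simp only [smul_sub, Finset.sum_sub_distrib, ← Finset.sum_smul, hM]
    congr 2
    push_cast [hc]
    ring
  rw [hN]
  -- entrywise
  have hentry : ∀ i j, (M - (c:ℂ) • 1) i j = M i j - if i = j then (c:ℂ) else 0 := by
    intro i j
    simp [Matrix.sub_apply, Matrix.smul_apply, Matrix.one_apply, mul_ite]
  have hsumm : ∑ i, m i = c * D := by
    rw [hm, hc, Finset.sum_comm, Finset.sum_mul]
    refine Finset.sum_congr rfl fun k _ => ?_
    rw [← Finset.mul_sum, ha k]
  have hsplit : ∀ (X : Matrix (Fin D) (Fin D) ℂ),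
      frobSq X = ∑ i, ‖X i i‖^2 + ∑ i, ∑ j ∈ Finset.univ.erase i, ‖X i j‖^2 := by
    intro X
    rw [frobSq, ← Finset.sum_add_distrib]
    refine Finset.sum_congr rfl fun i _ => ?_
    exact (Finset.add_sum_erase _ _ (Finset.mem_univ i)).symm
  rw [hsplit (M - (c:ℂ) • 1), hsplit M]
  have hrest : ∀ i, ∀ j ∈ Finset.univ.erase i, ‖(M - (c:ℂ) • 1) i j‖^2 = ‖M i j‖^2 := by
    intro i j hj
    rw [hentry, if_neg (Finset.ne_of_mem_erase (Finset.mem_erase.mpr ⟨(Finset.mem_erase.mp hj).1.symm, Finset.mem_univ _⟩) )]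
    ring_nf
  have hR : ∑ i, ∑ j ∈ Finset.univ.erase i, ‖(M - (c:ℂ) • 1) i j‖^2
      = ∑ i, ∑ j ∈ Finset.univ.erase i, ‖M i j‖^2 :=
    Finset.sum_congr rfl fun i _ => Finset.sum_congr rfl fun j hj => hrest i j hj
  rw [hR]
  gcongr ?_ + _
  have hdiagN : ∀ i, ‖(M - (c:ℂ) • 1) i i‖^2 = (m i - c)^2 := by
    intro i
    rw [hentry, if_pos rfl, hMdiag]
    rw [show ((m i : ℝ) : ℂ) - (c:ℂ) = ((m i - c : ℝ) : ℂ) by push_cast; ring]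
    rw [Complex.norm_real, Real.norm_eq_abs, sq_abs]
  have hdiagM : ∀ i, ‖M i i‖^2 = (m i)^2 := by
    intro i; rw [hMdiag, Complex.norm_real, Real.norm_eq_abs, sq_abs]
  simp only [hdiagN, hdiagM]
  have expand : ∑ i, (m i - c)^2 = ∑ i, (m i)^2 - 2*c*(∑ i, m i) + D * c^2 := by
    have h : ∀ i : Fin D, (m i - c)^2 = m i^2 - (2*c) * m i + c^2 := fun i => by ring
    simp only [h, Finset.sum_add_distrib, Finset.sum_sub_distrib, ← Finset.mul_sum,
      Finset.sum_const, Finset.card_univ, Fintype.card_fin, nsmul_eq_mul]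
    try ring
  rw [expand, hsumm]
  nlinarith [sq_nonneg c, Nat.cast_nonneg (α := ℝ) D]

/-- If `‖a_k‖₂² = D` for all `k` and the centered measurement map
`v ↦ Σ_k v_k (a_k a_kᴴ − I_D)` satisfies the `ℓ₂`-robust null space property of order `s`
with parameters `ρ ∈ (0,1)`, `τ > 0`, then the uncentered map `v ↦ Σ_k v_k a_k a_kᴴ`
satisfies the same property with the same parameters. -/
theorem stmt_14 {D K : ℕ} (s : ℕ) (hs : 0 < s)
    (a : Fin K → Fin D → ℂ) (ha : ∀ k, ∑ i, ‖a k i‖ ^ 2 = (D : ℝ))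
    (ρ τ : ℝ) (hρ0 : 0 < ρ) (hρ1 : ρ < 1) (hτ : 0 < τ)
    (hNSP : ∀ v : Fin K → ℝ, ∀ S : Finset (Fin K), S.card ≤ s →
      Real.sqrt (∑ i ∈ S, v i ^ 2)
        ≤ ρ / Real.sqrt s * (∑ i ∈ Sᶜ, |v i|)
          + τ * Real.sqrt (frobSq (∑ k, (v k : ℂ) •
              (vecMulVec (a k) (star (a k)) - 1)))) :
    ∀ v : Fin K → ℝ, ∀ S : Finset (Fin K), S.card ≤ s →
      Real.sqrt (∑ i ∈ S, v i ^ 2)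
        ≤ ρ / Real.sqrt s * (∑ i ∈ Sᶜ, |v i|)
          + τ * Real.sqrt (frobSq (∑ k, (v k : ℂ) •
              vecMulVec (a k) (star (a k)))) := by
  intro v S hS
  refine (hNSP v S hS).trans ?_
  have := key a ha v
  gcongr
end

section
/- Let (Ω, 𝔽, ℙ) be a probability space, let D, M be positive integers, and let y(1), …, y(M) : Ω → ℂ^D be i.i.d. random vectors such that for each t the coordinates y_1(t), …, y_D(t) are mutually independent and satisfy E[y_i(t)] = 0, E[|y_i(t)|²] = β_i, and E[|y_i(t)|⁴] = 2 β_i² for given β_1,…,β_D ≥ 0 (the fourth-moment identity holds, e.g., for circularly-symmetric complex Gaussian coordinates). Let Σ̂ = (1/M) Σ_{t=1}^M y(t) y(t)^H be the sample covariance matrix and Σ = diag(β_1,…,β_D) the true covariance matrix. Then E[ ‖Σ̂ − Σ‖_F² ] = ( Σ_{i=1}^D β_i )² / M = tr(Σ)² / M. -/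
open Matrix MeasureTheory ProbabilityTheory

section Aux

variable {Ω : Type*} [MeasurableSpace Ω] {μ : Measure Ω} [IsProbabilityMeasure μ]

/-- Complex version of `IndepFun.integral_mul`, via Fubini on the product of the laws. -/
lemma indep_integral_mul_complex {X Y : Ω → ℂ}
    (h : IndepFun X Y μ) (hX : AEMeasurable X μ) (hY : AEMeasurable Y μ) :
    ∫ ω, X ω * Y ω ∂μ = (∫ ω, X ω ∂μ) * ∫ ω, Y ω ∂μ := by
  have hmap := (indepFun_iff_map_prod_eq_prod_map_map hX hY).mp h
  have h1 : IsProbabilityMeasure (μ.map X) := Measure.isProbabilityMeasure_map hX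
  have h2 : IsProbabilityMeasure (μ.map Y) := Measure.isProbabilityMeasure_map hY
  calc ∫ ω, X ω * Y ω ∂μ
      = ∫ p : ℂ × ℂ, p.1 * p.2 ∂(μ.map fun ω => (X ω, Y ω)) := by
        rw [integral_map (f := fun p : ℂ × ℂ => p.1 * p.2) (hX.prodMk hY)
          (measurable_fst.mul measurable_snd).aestronglyMeasurable]
    _ = ∫ p : ℂ × ℂ, p.1 * p.2 ∂((μ.map X).prod (μ.map Y)) := by rw [hmap]
    _ = (∫ x : ℂ, x ∂(μ.map X)) * ∫ y : ℂ, y ∂(μ.map Y) :=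
        integral_prod_mul (fun x => x) (fun y => y)
    _ = _ := by
        rw [show (∫ x : ℂ, x ∂(μ.map X)) = ∫ ω, X ω ∂μ from
            integral_map hX measurable_id.aestronglyMeasurable,
          show (∫ x : ℂ, x ∂(μ.map Y)) = ∫ ω, Y ω ∂μ from
            integral_map hY measurable_id.aestronglyMeasurable]

lemma mul_star_self_eq (z : ℂ) : z * star z = ((‖z‖ ^ 2 : ℝ) : ℂ) := by
  rw [Complex.star_def, Complex.mul_conj, Complex.normSq_eq_norm_sq]

lemma integral_cpx_ofReal {Ω : Type*} [MeasurableSpace Ω] {μ : Measure Ω} {f : Ω → ℝ} :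
    ∫ ω, ((f ω : ℝ) : ℂ) ∂μ = ((∫ ω, f ω ∂μ : ℝ) : ℂ) :=
  integral_ofReal

end Aux

/-- For i.i.d. random vectors `y(1), …, y(M) : Ω → ℂ^D` with mutually
independent centered coordinates satisfying `E[|y_i|²] = β_i` and `E[|y_i|⁴] = 2β_i²`, the
sample covariance matrix `Σ̂ = (1/M) Σ_t y(t) y(t)ᴴ` and the true covariance
`Σ = diag(β)` satisfy `E[‖Σ̂ − Σ‖_F²] = (Σ_i β_i)²/M = tr(Σ)²/M`. -/
theorem stmt_17 {Ω : Type*} [MeasurableSpace Ω] (μ : Measure Ω)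
    [IsProbabilityMeasure μ] (D M : ℕ) (hD : 0 < D) (hM : 0 < M)
    (y : Fin M → Ω → Fin D → ℂ) (hmeas : ∀ t, Measurable (y t))
    (hindep : iIndepFun y μ)
    (hident : ∀ t t' : Fin M, Measure.map (y t) μ = Measure.map (y t') μ)
    (hcoord : ∀ t : Fin M, iIndepFun (fun i ω => y t ω i) μ)
    (β : Fin D → ℝ) (hβ : ∀ i, 0 ≤ β i)
    (hint4 : ∀ t i, Integrable (fun ω => ‖y t ω i‖ ^ 4) μ)
    (hmean : ∀ t i, ∫ ω, y t ω i ∂μ = 0)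
    (hvar : ∀ t i, ∫ ω, ‖y t ω i‖ ^ 2 ∂μ = β i)
    (hfour : ∀ t i, ∫ ω, ‖y t ω i‖ ^ 4 ∂μ = 2 * β i ^ 2) :
    ∫ ω, frobSq ((M : ℂ)⁻¹ • (∑ t, vecMulVec (y t ω) (star (y t ω)))
        - Matrix.diagonal (fun i => (β i : ℂ))) ∂μ
      = (∑ i, β i) ^ 2 / M := by
  classical
  have hMc : (M : ℂ) ≠ 0 := Nat.cast_ne_zero.mpr hM.ne'
  have hMr : (M : ℝ) ≠ 0 := Nat.cast_ne_zero.mpr hM.ne'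
  have mstar : Measurable (star : ℂ → ℂ) := continuous_star.measurable
  have myi : ∀ t (i : Fin D), Measurable fun ω => y t ω i :=
    fun t i => (measurable_pi_apply i).comp (hmeas t)
  set Z : Fin D → Fin D → Fin M → Ω → ℂ :=
    fun i j t ω => y t ω i * star (y t ω j) - (if i = j then (β i : ℂ) else 0) with hZ
  have mZ : ∀ i j t, Measurable (Z i j t) := fun i j t =>
    ((myi t i).mul (mstar.comp (myi t j))).sub measurable_const
  -- second moments are integrable
  have int2 : ∀ t i, Integrable (fun ω => ‖y t ω i‖ ^ 2) μ := by
    intro t i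
    refine ((integrable_const (1 : ℝ)).add (hint4 t i)).mono'
      (((myi t i).norm.pow_const 2).aestronglyMeasurable) ?_
    filter_upwards with ω
    have h0 : (0 : ℝ) ≤ ‖y t ω i‖ := norm_nonneg _
    simp only [Pi.add_apply]
    rw [Real.norm_eq_abs, abs_of_nonneg (by positivity)]
    nlinarith [sq_nonneg (‖y t ω i‖ ^ 2 - 1)]
  -- norm bound on Z
  have normbound : ∀ (i j : Fin D) (t) ω,
      ‖Z i j t ω‖ ≤ ‖y t ω i‖ * ‖y t ω j‖ + β i := by
    intro i j t ω
    have h1 := norm_sub_le (y t ω i * star (y t ω j)) (if i = j then (β i : ℂ) else 0)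
    have h2 : ‖(if i = j then (β i : ℂ) else 0)‖ ≤ β i := by
      split
      · rw [Complex.norm_real, Real.norm_eq_abs, abs_of_nonneg (hβ i)]
      · simpa using hβ i
    calc ‖Z i j t ω‖ ≤ ‖y t ω i * star (y t ω j)‖ + ‖(if i = j then (β i : ℂ) else 0)‖ := h1
      _ ≤ ‖y t ω i‖ * ‖y t ω j‖ + β i := by
          rw [norm_mul, norm_star]; exact add_le_add le_rfl h2
  -- |Z|² is integrable
  have intZsq : ∀ (i j : Fin D) (t), Integrable (fun ω => ‖Z i j t ω‖ ^ 2) μ := by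
    intro i j t
    refine (((hint4 t i).add (hint4 t j)).add (integrable_const (2 * β i ^ 2))).mono'
      (((mZ i j t).norm.pow_const 2).aestronglyMeasurable) ?_
    filter_upwards with ω
    have hb := normbound i j t ω
    have h0 : (0 : ℝ) ≤ ‖Z i j t ω‖ := norm_nonneg _
    have h1 : (0 : ℝ) ≤ ‖y t ω i‖ := norm_nonneg _
    have h2 : (0 : ℝ) ≤ ‖y t ω j‖ := norm_nonneg _
    simp only [Pi.add_apply]
    rw [Real.norm_eq_abs, abs_of_nonneg (by positivity)]
    nlinarith [sq_nonneg (‖y t ω i‖ * ‖y t ω j‖ - β i),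
      sq_nonneg (‖y t ω i‖ ^ 2 - ‖y t ω j‖ ^ 2), hβ i,
      mul_nonneg h1 h2]
  -- Z is integrable
  have intZ : ∀ (i j : Fin D) (t), Integrable (Z i j t) μ := by
    intro i j t
    refine ((integrable_const (1 : ℝ)).add (intZsq i j t)).mono'
      (mZ i j t).aestronglyMeasurable ?_
    filter_upwards with ω
    simp only [Pi.add_apply]
    nlinarith [norm_nonneg (Z i j t ω), sq_nonneg (‖Z i j t ω‖ - 1)]
  -- products of Z's are integrable
  have intZZ : ∀ (i j : Fin D) (t s), Integrable (fun ω => Z i j t ω * star (Z i j s ω)) μ := by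
    intro i j t s
    refine ((intZsq i j t).add (intZsq i j s)).mono'
      ((mZ i j t).mul (mstar.comp (mZ i j s))).aestronglyMeasurable ?_
    filter_upwards with ω
    simp only [Pi.add_apply]
    rw [norm_mul, norm_star]
    nlinarith [sq_nonneg (‖Z i j t ω‖ - ‖Z i j s ω‖), norm_nonneg (Z i j t ω),
      norm_nonneg (Z i j s ω)]
  -- entry products are integrable
  have intProd : ∀ t (i j : Fin D), Integrable (fun ω => y t ω i * star (y t ω j)) μ := by
    intro t i j
    have h := (intZ i j t).add (integrable_const (if i = j then (β i : ℂ) else 0))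
    have he : (fun ω => y t ω i * star (y t ω j))
        = fun ω => Z i j t ω + (if i = j then (β i : ℂ) else 0) := by
      funext ω; rw [hZ]; ring
    rw [he]; exact h
  -- Z is centered
  have EZ : ∀ (i j : Fin D) (t), ∫ ω, Z i j t ω ∂μ = 0 := by
    intro i j t
    have h1 : ∫ ω, Z i j t ω ∂μ
        = (∫ ω, y t ω i * star (y t ω j) ∂μ) - (if i = j then (β i : ℂ) else 0) := by
      rw [hZ]
      rw [integral_sub (intProd t i j) (integrable_const _), integral_const]
      simp
    rw [h1]
    by_cases hij : i = j
    · subst hij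
      have hptw : (fun ω => y t ω i * star (y t ω i))
          = fun ω => ((‖y t ω i‖ ^ 2 : ℝ) : ℂ) := by
        funext ω; exact mul_star_self_eq _
      rw [hptw, integral_cpx_ofReal, hvar t i]
      simp
    · have hind : IndepFun (fun ω => y t ω i) (fun ω => star (y t ω j)) μ :=
        ((hcoord t).indepFun hij).comp measurable_id mstar
      rw [indep_integral_mul_complex hind (myi t i).aemeasurable
        (mstar.comp (myi t j)).aemeasurable, hmean t i]
      simp [hij]
  -- second moment of Z
  have EZsq : ∀ (i j : Fin D) (t), ∫ ω, ‖Z i j t ω‖ ^ 2 ∂μ = β i * β j := by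
    intro i j t
    by_cases hij : i = j
    · subst hij
      have hptw : (fun ω => ‖Z i i t ω‖ ^ 2)
          = fun ω => ‖y t ω i‖ ^ 4 - 2 * β i * ‖y t ω i‖ ^ 2 + β i ^ 2 := by
        funext ω
        have hz : Z i i t ω = ((‖y t ω i‖ ^ 2 - β i : ℝ) : ℂ) := by
          rw [hZ]; simp only [if_pos rfl]
          rw [mul_star_self_eq]; push_cast; ring
        rw [hz, Complex.norm_real, Real.norm_eq_abs, sq_abs]; ring
      have e1 : Integrable (fun ω => ‖y t ω i‖ ^ 4 - 2 * β i * ‖y t ω i‖ ^ 2) μ := by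
        have h := (hint4 t i).sub ((int2 t i).const_mul (2 * β i))
        exact h
      have e2 : Integrable (fun ω => 2 * β i * ‖y t ω i‖ ^ 2) μ := (int2 t i).const_mul _
      rw [hptw, integral_add e1 (integrable_const _),
        integral_sub (hint4 t i) e2, integral_const_mul, hfour t i, hvar t i, integral_const]
      simp only [measure_univ, probReal_univ, ENNReal.toReal_one, smul_eq_mul, one_mul]
      ring
    · have hptw : (fun ω => ‖Z i j t ω‖ ^ 2)
          = (fun ω => ‖y t ω i‖ ^ 2) * fun ω => ‖y t ω j‖ ^ 2 := by
        funext ω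
        simp only [hZ, if_neg hij, sub_zero, Pi.mul_apply, norm_mul, norm_star]
        ring
      have hind : IndepFun (fun ω => ‖y t ω i‖ ^ 2) (fun ω => ‖y t ω j‖ ^ 2) μ :=
        ((hcoord t).indepFun hij).comp
          (measurable_norm.pow_const 2) (measurable_norm.pow_const 2)
      rw [hptw, IndepFun.integral_mul_eq_mul_integral hind ((myi t i).norm.pow_const 2).aestronglyMeasurable
        ((myi t j).norm.pow_const 2).aestronglyMeasurable]
      rw [show integral μ (fun ω => ‖y t ω i‖ ^ 2) = β i from hvar t i,
        show integral μ (fun ω => ‖y t ω j‖ ^ 2) = β j from hvar t j]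
  -- cross terms vanish
  have Cross : ∀ (i j : Fin D) (t s), t ≠ s →
      ∫ ω, Z i j t ω * star (Z i j s ω) ∂μ = 0 := by
    intro i j t s hts
    have hφ : Measurable fun v : Fin D → ℂ =>
        v i * star (v j) - (if i = j then (β i : ℂ) else 0) :=
      ((measurable_pi_apply i).mul (mstar.comp (measurable_pi_apply j))).sub measurable_const
    have hind : IndepFun (Z i j t) (fun ω => star (Z i j s ω)) μ :=
      (hindep.indepFun hts).comp hφ (mstar.comp hφ)
    rw [indep_integral_mul_complex hind (mZ i j t).aemeasurable
      (mstar.comp (mZ i j s)).aemeasurable, EZ i j t, zero_mul]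
  -- diagonal terms
  have Diag : ∀ (i j : Fin D) (t),
      ∫ ω, Z i j t ω * star (Z i j t ω) ∂μ = ((β i * β j : ℝ) : ℂ) := by
    intro i j t
    have hptw : (fun ω => Z i j t ω * star (Z i j t ω))
        = fun ω => ((‖Z i j t ω‖ ^ 2 : ℝ) : ℂ) := by
      funext ω; exact mul_star_self_eq _
    rw [hptw, integral_cpx_ofReal, EZsq i j t]
  -- per-entry computation
  have key : ∀ i j : Fin D,
      Integrable (fun ω => ‖((M : ℂ)⁻¹ • (∑ t, vecMulVec (y t ω) (star (y t ω)))
          - Matrix.diagonal (fun i => (β i : ℂ))) i j‖ ^ 2) μ ∧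
      ∫ ω, ‖((M : ℂ)⁻¹ • (∑ t, vecMulVec (y t ω) (star (y t ω)))
          - Matrix.diagonal (fun i => (β i : ℂ))) i j‖ ^ 2 ∂μ = β i * β j / M := by
    intro i j
    have hA : ∀ ω, ((M : ℂ)⁻¹ • (∑ t, vecMulVec (y t ω) (star (y t ω)))
        - Matrix.diagonal (fun i => (β i : ℂ))) i j
        = (M : ℂ)⁻¹ * ∑ t, Z i j t ω := by
      intro ω
      simp only [Matrix.sub_apply, Matrix.smul_apply, Matrix.sum_apply,
        vecMulVec_apply, Pi.star_apply, Matrix.diagonal_apply, smul_eq_mul, hZ,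
        Finset.sum_sub_distrib, Finset.sum_const, Finset.card_univ, Fintype.card_fin,
        nsmul_eq_mul]
      rw [mul_sub, inv_mul_cancel_left₀ hMc]
    have hgi : Integrable (fun ω => ∑ t, ∑ s, Z i j t ω * star (Z i j s ω)) μ :=
      integrable_finset_sum _ fun t _ => integrable_finset_sum _ fun s _ => intZZ i j t s
    have hnorm : ∀ ω, ‖((M : ℂ)⁻¹ • (∑ t, vecMulVec (y t ω) (star (y t ω)))
        - Matrix.diagonal (fun i => (β i : ℂ))) i j‖ ^ 2
        = (M : ℝ)⁻¹ ^ 2 * (∑ t, ∑ s, Z i j t ω * star (Z i j s ω)).re := by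
      intro ω
      have hs : ((∑ t, Z i j t ω) * star (∑ s, Z i j s ω))
          = ∑ t, ∑ s, Z i j t ω * star (Z i j s ω) := by
        rw [star_sum, Finset.sum_mul_sum]
      rw [hA ω, norm_mul, mul_pow, ← hs, mul_star_self_eq, Complex.ofReal_re,
        norm_inv]
      norm_num
    have hint : Integrable (fun ω => ‖((M : ℂ)⁻¹ • (∑ t, vecMulVec (y t ω) (star (y t ω)))
        - Matrix.diagonal (fun i => (β i : ℂ))) i j‖ ^ 2) μ := by
      have h1 : Integrable (fun ω => (∑ t, ∑ s, Z i j t ω * star (Z i j s ω)).re) μ := by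
        have h := hgi.re
        simpa [RCLike.re_to_complex] using h
      refine (h1.const_mul ((M : ℝ)⁻¹ ^ 2)).congr ?_
      filter_upwards with ω
      exact (hnorm ω).symm
    refine ⟨hint, ?_⟩
    have hire : ∫ ω, (∑ t, ∑ s, Z i j t ω * star (Z i j s ω)).re ∂μ
        = (∫ ω, ∑ t, ∑ s, Z i j t ω * star (Z i j s ω) ∂μ).re := by
      have := integral_re (𝕜 := ℂ) hgi
      simpa [RCLike.re_to_complex] using this
    have hsum : ∫ ω, ∑ t, ∑ s, Z i j t ω * star (Z i j s ω) ∂μ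
        = ((M * (β i * β j) : ℝ) : ℂ) := by
      rw [integral_finset_sum _ fun t _ => integrable_finset_sum _ fun s _ => intZZ i j t s]
      have hin : ∀ t : Fin M, ∑ s, ∫ ω, Z i j t ω * star (Z i j s ω) ∂μ
          = ((β i * β j : ℝ) : ℂ) := by
        intro t
        rw [Finset.sum_eq_single t (fun s _ hst => Cross i j t s (Ne.symm hst))
          (fun h => absurd (Finset.mem_univ t) h)]
        · exact Diag i j t
      have hone : ∀ t : Fin M, ∫ ω, ∑ s, Z i j t ω * star (Z i j s ω) ∂μ
          = ((β i * β j : ℝ) : ℂ) := by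
        intro t
        rw [integral_finset_sum _ fun s _ => intZZ i j t s]
        exact hin t
      simp only [hone, Finset.sum_const, Finset.card_univ, Fintype.card_fin, nsmul_eq_mul]
      push_cast; ring
    calc ∫ ω, ‖((M : ℂ)⁻¹ • (∑ t, vecMulVec (y t ω) (star (y t ω)))
            - Matrix.diagonal (fun i => (β i : ℂ))) i j‖ ^ 2 ∂μ
        = ∫ ω, (M : ℝ)⁻¹ ^ 2 * (∑ t, ∑ s, Z i j t ω * star (Z i j s ω)).re ∂μ := by
          simp only [hnorm]
      _ = (M : ℝ)⁻¹ ^ 2 * ∫ ω, (∑ t, ∑ s, Z i j t ω * star (Z i j s ω)).re ∂μ :=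
          integral_const_mul _ _
      _ = (M : ℝ)⁻¹ ^ 2 * (M * (β i * β j)) := by
          rw [hire, hsum, Complex.ofReal_re]
      _ = β i * β j / M := by field_simp
  -- assemble
  have hfe : (fun ω => frobSq ((M : ℂ)⁻¹ • (∑ t, vecMulVec (y t ω) (star (y t ω)))
      - Matrix.diagonal (fun i => (β i : ℂ))))
      = fun ω => ∑ i, ∑ j, ‖((M : ℂ)⁻¹ • (∑ t, vecMulVec (y t ω) (star (y t ω)))
      - Matrix.diagonal (fun i => (β i : ℂ))) i j‖ ^ 2 := rfl
  rw [hfe, integral_finset_sum _ fun i _ => integrable_finset_sum _ fun j _ => (key i j).1]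
  have : ∀ i : Fin D, ∫ ω, ∑ j, ‖((M : ℂ)⁻¹ • (∑ t, vecMulVec (y t ω) (star (y t ω)))
      - Matrix.diagonal (fun i => (β i : ℂ))) i j‖ ^ 2 ∂μ
      = ∑ j, β i * β j / M := by
    intro i
    rw [integral_finset_sum _ fun j _ => (key i j).1]
    exact Finset.sum_congr rfl fun j _ => (key i j).2
  simp only [this]
  rw [show (∑ i, ∑ j, β i * β j / (M:ℝ)) = (∑ i, ∑ j, β i * β j) / M by
    simp_rw [Finset.sum_div]]
  rw [sq, Finset.sum_mul_sum]
end

section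
/- Let (Ω, 𝔽, ℙ) be a probability space, let D, M be positive integers, and let y(1), …, y(M) : Ω → ℂ^D be i.i.d. random vectors such that for each t the coordinates y_1(t), …, y_D(t) are mutually independent and satisfy E[y_i(t)] = 0, E[|y_i(t)|²] = β_i, and E[|y_i(t)|⁴] ≤ ς β_i² for given β_1,…,β_D ≥ 0 and a finite constant ς ≥ 1. Let Σ̂ = (1/M) Σ_{t=1}^M y(t) y(t)^H and Σ = diag(β_1,…,β_D). Then E[ ‖Σ̂ − Σ‖_F² ] ≤ max{ς − 1, 1} · ( Σ_{i=1}^D β_i )² / M = max{ς − 1, 1} · tr(Σ)² / M. -/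
open Matrix MeasureTheory ProbabilityTheory

lemma aux_sum_sq_integral {Ω : Type*} [MeasurableSpace Ω] {μ : Measure Ω}
    [IsProbabilityMeasure μ] {M : ℕ} {G : Fin M → Ω → ℝ}
    (hindep : iIndepFun G μ)
    (hmem : ∀ t, MemLp (G t) 2 μ)
    (hmean : ∀ t, ∫ ω, G t ω ∂μ = 0) :
    ∫ ω, (∑ t, G t ω) ^ 2 ∂μ = ∑ t, ∫ ω, G t ω ^ 2 ∂μ := by
  have hpair : Set.Pairwise ↑(Finset.univ : Finset (Fin M))
      fun i j => IndepFun (G i) (G j) μ := fun i _ j _ hij => hindep.indepFun hij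
  have hsum : variance (∑ t, G t) μ = ∑ t, variance (G t) μ :=
    IndepFun.variance_sum (fun t _ => hmem t) hpair
  have h2 : ∀ t, variance (G t) μ = ∫ ω, G t ω ^ 2 ∂μ := by
    intro t
    rw [variance_eq_sub (hmem t), hmean t]
    simp
  have hintsum : ∫ ω, (∑ t, G t) ω ∂μ = 0 := by
    simp only [Finset.sum_apply]
    rw [integral_finset_sum _ (fun t _ => (hmem t).integrable one_le_two)]
    simp [hmean]
  have h3 : ∫ ω, (∑ t, G t ω) ^ 2 ∂μ = variance (∑ t, G t) μ := by
    rw [variance_eq_sub (memLp_finset_sum' _ (fun t _ => hmem t)), hintsum]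
    simp only [Pi.pow_apply, Finset.sum_apply]
    ring
  rw [h3, hsum]
  exact Finset.sum_congr rfl fun t _ => h2 t


lemma aux_normsq (z : ℂ) : ‖z‖ ^ 2 = z.re ^ 2 + z.im ^ 2 := by
  rw [Complex.sq_norm, Complex.normSq_apply]; ring

lemma aux_pair {Ω : Type*} [MeasurableSpace Ω] (μ : Measure Ω)
    [IsProbabilityMeasure μ] (D M : ℕ) (hM : 0 < M)
    (y : Fin M → Ω → Fin D → ℂ) (hmeas : ∀ t, Measurable (y t))
    (hindep : iIndepFun y μ)
    (hcoord : ∀ t : Fin M, iIndepFun (fun i ω => y t ω i) μ)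
    (β : Fin D → ℝ) (hβ : ∀ i, 0 ≤ β i) (ς : ℝ) (hς : 1 ≤ ς)
    (hint4 : ∀ t i, Integrable (fun ω => ‖y t ω i‖ ^ 4) μ)
    (hmean : ∀ t i, ∫ ω, y t ω i ∂μ = 0)
    (hvar : ∀ t i, ∫ ω, ‖y t ω i‖ ^ 2 ∂μ = β i)
    (hfour : ∀ t i, ∫ ω, ‖y t ω i‖ ^ 4 ∂μ ≤ ς * β i ^ 2) (i j : Fin D) :
    Integrable (fun ω =>
        ‖(M:ℂ)⁻¹ * ∑ t, (y t ω i * (starRingEnd ℂ) (y t ω j)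
          - (if i = j then (β i : ℂ) else 0))‖ ^ 2) μ ∧
      ∫ ω, ‖(M:ℂ)⁻¹ * ∑ t, (y t ω i * (starRingEnd ℂ) (y t ω j)
          - (if i = j then (β i : ℂ) else 0))‖ ^ 2 ∂μ
        ≤ (if i = j then (ς - 1) * β i ^ 2 else β i * β j) / M := by
  classical
  set c : ℂ := if i = j then (β i : ℂ) else 0 with hc
  set gC : (Fin D → ℂ) → ℂ := fun v => v i * (starRingEnd ℂ) (v j) - c with hgC
  have hgCmeas : Measurable gC := by
    apply Measurable.sub _ measurable_const
    exact (measurable_pi_apply i).mul ((Complex.continuous_conj.measurable).comp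
      (measurable_pi_apply j))
  set F : Fin M → Ω → ℂ := fun t => gC ∘ (y t) with hF
  set R : Fin M → Ω → ℝ := fun t => (Complex.re ∘ gC) ∘ (y t) with hR
  set I : Fin M → Ω → ℝ := fun t => (Complex.im ∘ gC) ∘ (y t) with hI
  have hyk : ∀ t (k : Fin D), Measurable fun ω => y t ω k :=
    fun t k => (measurable_pi_apply k).comp (hmeas t)
  have hFmeas : ∀ t, Measurable (F t) := fun t => hgCmeas.comp (hmeas t)
  have hRmeas : ∀ t, Measurable (R t) := fun t =>
    (Complex.measurable_re.comp hgCmeas).comp (hmeas t)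
  have hImeas : ∀ t, Measurable (I t) := fun t =>
    (Complex.measurable_im.comp hgCmeas).comp (hmeas t)
  -- independence across t
  have hRindep : iIndepFun R μ :=
    hindep.comp (fun _ => Complex.re ∘ gC) (fun _ => Complex.measurable_re.comp hgCmeas)
  have hIindep : iIndepFun I μ :=
    hindep.comp (fun _ => Complex.im ∘ gC) (fun _ => Complex.measurable_im.comp hgCmeas)
  -- basic integrability
  have hy2 : ∀ t k, Integrable (fun ω => ‖y t ω k‖ ^ 2) μ := by
    intro t k
    have hg : Integrable (fun ω => ‖y t ω k‖ ^ 4 + 1) μ := (hint4 t k).add (integrable_const 1)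
    refine hg.mono' (((hyk t k).norm.pow_const 2).aestronglyMeasurable) (ae_of_all _ fun ω => ?_)
    have h0 : (0:ℝ) ≤ ‖y t ω k‖ := norm_nonneg _
    rw [Real.norm_of_nonneg (by positivity)]
    nlinarith [sq_nonneg (‖y t ω k‖ ^ 2 - 1)]
  have hy1 : ∀ t k, Integrable (fun ω => y t ω k) μ := by
    intro t k
    have hg : Integrable (fun ω => ‖y t ω k‖ ^ 2 + 1) μ := (hy2 t k).add (integrable_const 1)
    refine hg.mono' ((hyk t k).aestronglyMeasurable) (ae_of_all _ fun ω => ?_)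
    have h0 : (0:ℝ) ≤ ‖y t ω k‖ := norm_nonneg _
    nlinarith [sq_nonneg (‖y t ω k‖ - 1)]
  have hprod : ∀ t, Integrable (fun ω => ‖y t ω i‖ ^ 2 * ‖y t ω j‖ ^ 2) μ := by
    intro t
    by_cases hij : i = j
    · subst hij
      have : (fun ω => ‖y t ω i‖ ^ 2 * ‖y t ω i‖ ^ 2) = fun ω => ‖y t ω i‖ ^ 4 := by
        funext ω; ring
      rw [this]; exact hint4 t i
    · have hind : IndepFun (fun ω => ‖y t ω i‖ ^ 2) (fun ω => ‖y t ω j‖ ^ 2) μ :=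
        ((hcoord t).indepFun hij).comp (measurable_norm.pow_const 2) (measurable_norm.pow_const 2)
      exact hind.integrable_mul (hy2 t i) (hy2 t j)
  have hprodval : i ≠ j → ∀ t, ∫ ω, ‖y t ω i‖ ^ 2 * ‖y t ω j‖ ^ 2 ∂μ = β i * β j := by
    intro hij t
    have hind : IndepFun (fun ω => ‖y t ω i‖ ^ 2) (fun ω => ‖y t ω j‖ ^ 2) μ :=
      ((hcoord t).indepFun hij).comp (measurable_norm.pow_const 2) (measurable_norm.pow_const 2)
    have := hind.integral_fun_mul_eq_mul_integral (hy2 t i).aestronglyMeasurable (hy2 t j).aestronglyMeasurable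
    rw [hvar t i, hvar t j] at this
    exact this
  have hnormF : ∀ t ω, ‖F t ω‖ ≤ ‖y t ω i‖ * ‖y t ω j‖ + ‖c‖ := by
    intro t ω
    calc ‖F t ω‖ ≤ ‖y t ω i * (starRingEnd ℂ) (y t ω j)‖ + ‖c‖ := norm_sub_le _ _
    _ = ‖y t ω i‖ * ‖y t ω j‖ + ‖c‖ := by
        rw [norm_mul, RCLike.norm_conj]
  have hF2 : ∀ t, Integrable (fun ω => ‖F t ω‖ ^ 2) μ := by
    intro t
    have hg : Integrable (fun ω => 2 * (‖y t ω i‖ ^ 2 * ‖y t ω j‖ ^ 2) + 2 * ‖c‖ ^ 2) μ :=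
      ((hprod t).const_mul 2).add (integrable_const _)
    refine hg.mono' (((hFmeas t).norm.pow_const 2).aestronglyMeasurable)
      (ae_of_all _ fun ω => ?_)
    have h1 := hnormF t ω
    have h0 : (0:ℝ) ≤ ‖F t ω‖ := norm_nonneg _
    have h2 : (0:ℝ) ≤ ‖y t ω i‖ * ‖y t ω j‖ := by positivity
    rw [Real.norm_of_nonneg (by positivity)]
    nlinarith [sq_nonneg (‖y t ω i‖ * ‖y t ω j‖ - ‖c‖)]
  have hR2 : ∀ t, Integrable (fun ω => R t ω ^ 2) μ := by
    intro t
    refine (hF2 t).mono' (((hRmeas t).pow_const 2).aestronglyMeasurable)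
      (ae_of_all _ fun ω => ?_)
    have hrf : R t ω = (F t ω).re := rfl
    rw [Real.norm_of_nonneg (sq_nonneg _), aux_normsq, hrf]
    nlinarith [sq_nonneg ((F t ω).im)]
  have hI2 : ∀ t, Integrable (fun ω => I t ω ^ 2) μ := by
    intro t
    refine (hF2 t).mono' (((hImeas t).pow_const 2).aestronglyMeasurable)
      (ae_of_all _ fun ω => ?_)
    have hif : I t ω = (F t ω).im := rfl
    rw [Real.norm_of_nonneg (sq_nonneg _), aux_normsq, hif]
    nlinarith [sq_nonneg ((F t ω).re)]
  have hRmem : ∀ t, MemLp (R t) 2 μ :=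
    fun t => (memLp_two_iff_integrable_sq (hRmeas t).aestronglyMeasurable).2 (hR2 t)
  have hImem : ∀ t, MemLp (I t) 2 μ :=
    fun t => (memLp_two_iff_integrable_sq (hImeas t).aestronglyMeasurable).2 (hI2 t)
  -- mean zero and second-moment bounds
  obtain ⟨W, hW⟩ : ∃ w : ℝ, w = (if i = j then (ς - 1) * β i ^ 2 else β i * β j) := ⟨_, rfl⟩
  rw [← hW]
  have hRmean : ∀ t, ∫ ω, R t ω ∂μ = 0 := by
    intro t
    by_cases hij : i = j
    · subst hij
      have hid : R t = fun ω => ‖y t ω i‖ ^ 2 - β i := by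
        funext ω
        show (y t ω i * (starRingEnd ℂ) (y t ω i) - c).re = _
        rw [Complex.mul_conj, hc, if_pos rfl]
        simp [Complex.normSq_eq_norm_sq, ← Complex.ofReal_pow]
      rw [hid, integral_sub (hy2 t i) (integrable_const _), hvar t i, integral_const]
      simp
    · have hid : R t = fun ω =>
          (y t ω i).re * (y t ω j).re + (y t ω i).im * (y t ω j).im := by
        funext ω
        show (y t ω i * (starRingEnd ℂ) (y t ω j) - c).re = _
        rw [hc, if_neg hij]
        simp only [Complex.sub_re, Complex.mul_re, Complex.conj_re, Complex.conj_im,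
          Complex.zero_re, sub_zero]
        ring
      have hre : ∀ k, Integrable (fun ω => (y t ω k).re) μ := fun k => by
        simpa using (hy1 t k).re
      have him : ∀ k, Integrable (fun ω => (y t ω k).im) μ := fun k => by
        simpa using (hy1 t k).im
      have hmre : ∀ k, ∫ ω, (y t ω k).re ∂μ = 0 := fun k => by
        have h := integral_re (μ := μ) (f := fun ω => y t ω k) (hy1 t k)
        rw [hmean t k] at h
        simpa using h
      have hmim : ∀ k, ∫ ω, (y t ω k).im ∂μ = 0 := fun k => by
        have h := integral_im (μ := μ) (f := fun ω => y t ω k) (hy1 t k)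
        rw [hmean t k] at h
        simpa using h
      have hIrr : IndepFun (fun ω => (y t ω i).re) (fun ω => (y t ω j).re) μ :=
        ((hcoord t).indepFun hij).comp Complex.measurable_re Complex.measurable_re
      have hIii : IndepFun (fun ω => (y t ω i).im) (fun ω => (y t ω j).im) μ :=
        ((hcoord t).indepFun hij).comp Complex.measurable_im Complex.measurable_im
      have m1 : Integrable (fun ω => (y t ω i).re * (y t ω j).re) μ :=
        hIrr.integrable_mul (hre i) (hre j)
      have m2 : Integrable (fun ω => (y t ω i).im * (y t ω j).im) μ :=
        hIii.integrable_mul (him i) (him j)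
      rw [hid, integral_add m1 m2]
      have e1 : ∫ ω, (y t ω i).re * (y t ω j).re ∂μ
          = (∫ ω, (y t ω i).re ∂μ) * ∫ ω, (y t ω j).re ∂μ :=
        hIrr.integral_fun_mul_eq_mul_integral (hre i).aestronglyMeasurable (hre j).aestronglyMeasurable
      have e2 : ∫ ω, (y t ω i).im * (y t ω j).im ∂μ
          = (∫ ω, (y t ω i).im ∂μ) * ∫ ω, (y t ω j).im ∂μ :=
        hIii.integral_fun_mul_eq_mul_integral (him i).aestronglyMeasurable (him j).aestronglyMeasurable
      rw [e1, e2, hmre i, hmim i]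
      simp
  have hImean : ∀ t, ∫ ω, I t ω ∂μ = 0 := by
    intro t
    by_cases hij : i = j
    · subst hij
      have hid : I t = fun _ => (0 : ℝ) := by
        funext ω
        show (y t ω i * (starRingEnd ℂ) (y t ω i) - c).im = _
        rw [Complex.mul_conj, hc, if_pos rfl]
        simp
      rw [hid]; simp
    · have hid : I t = fun ω =>
          (y t ω i).im * (y t ω j).re - (y t ω i).re * (y t ω j).im := by
        funext ω
        show (y t ω i * (starRingEnd ℂ) (y t ω j) - c).im = _
        rw [hc, if_neg hij]
        simp only [Complex.sub_im, Complex.mul_im, Complex.conj_re, Complex.conj_im,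
          Complex.zero_im, sub_zero]
        ring
      have hre : ∀ k, Integrable (fun ω => (y t ω k).re) μ := fun k => by
        simpa using (hy1 t k).re
      have him : ∀ k, Integrable (fun ω => (y t ω k).im) μ := fun k => by
        simpa using (hy1 t k).im
      have hmre : ∀ k, ∫ ω, (y t ω k).re ∂μ = 0 := fun k => by
        have h := integral_re (μ := μ) (f := fun ω => y t ω k) (hy1 t k)
        rw [hmean t k] at h
        simpa using h
      have hmim : ∀ k, ∫ ω, (y t ω k).im ∂μ = 0 := fun k => by
        have h := integral_im (μ := μ) (f := fun ω => y t ω k) (hy1 t k)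
        rw [hmean t k] at h
        simpa using h
      have hIir : IndepFun (fun ω => (y t ω i).im) (fun ω => (y t ω j).re) μ :=
        ((hcoord t).indepFun hij).comp Complex.measurable_im Complex.measurable_re
      have hIri : IndepFun (fun ω => (y t ω i).re) (fun ω => (y t ω j).im) μ :=
        ((hcoord t).indepFun hij).comp Complex.measurable_re Complex.measurable_im
      have m1 : Integrable (fun ω => (y t ω i).im * (y t ω j).re) μ :=
        hIir.integrable_mul (him i) (hre j)
      have m2 : Integrable (fun ω => (y t ω i).re * (y t ω j).im) μ :=
        hIri.integrable_mul (hre i) (him j)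
      rw [hid, integral_sub m1 m2]
      have e1 : ∫ ω, (y t ω i).im * (y t ω j).re ∂μ
          = (∫ ω, (y t ω i).im ∂μ) * ∫ ω, (y t ω j).re ∂μ :=
        hIir.integral_fun_mul_eq_mul_integral (him i).aestronglyMeasurable (hre j).aestronglyMeasurable
      have e2 : ∫ ω, (y t ω i).re * (y t ω j).im ∂μ
          = (∫ ω, (y t ω i).re ∂μ) * ∫ ω, (y t ω j).im ∂μ :=
        hIri.integral_fun_mul_eq_mul_integral (hre i).aestronglyMeasurable (him j).aestronglyMeasurable
      rw [e1, e2, hmim i, hmre i]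
      simp
  have hF2val : ∀ t, ∫ ω, ‖F t ω‖ ^ 2 ∂μ ≤ W := by
    intro t
    by_cases hij : i = j
    · subst hij
      have hid : (fun ω => ‖F t ω‖ ^ 2)
          = fun ω => ‖y t ω i‖ ^ 4 - 2 * β i * ‖y t ω i‖ ^ 2 + β i ^ 2 := by
        funext ω
        have h1 : F t ω = ((‖y t ω i‖ ^ 2 - β i : ℝ) : ℂ) := by
          show y t ω i * (starRingEnd ℂ) (y t ω i) - c = _
          rw [Complex.mul_conj, hc, if_pos rfl]
          push_cast
          simp [Complex.normSq_eq_norm_sq]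
        rw [h1, Complex.norm_real, Real.norm_eq_abs, sq_abs]
        ring
      have m1 : Integrable (fun ω => ‖y t ω i‖ ^ 4 - 2 * β i * ‖y t ω i‖ ^ 2) μ :=
        (hint4 t i).sub ((hy2 t i).const_mul _)
      rw [hid, hW, if_pos rfl]
      rw [integral_add m1 (integrable_const _),
        integral_sub (hint4 t i) ((hy2 t i).const_mul _), integral_const_mul, hvar t i,
        integral_const]
      have := hfour t i
      simp only [probReal_univ, measure_univ, ENNReal.toReal_one, smul_eq_mul, one_mul]
      nlinarith [hβ i]
    · have hid : (fun ω => ‖F t ω‖ ^ 2) = fun ω => ‖y t ω i‖ ^ 2 * ‖y t ω j‖ ^ 2 := by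
        funext ω
        have h1 : F t ω = y t ω i * (starRingEnd ℂ) (y t ω j) := by
          show y t ω i * (starRingEnd ℂ) (y t ω j) - c = _
          rw [hc, if_neg hij, sub_zero]
        rw [h1, norm_mul, RCLike.norm_conj, mul_pow]
      rw [hid, hprodval hij t, hW, if_neg hij]
  -- assemble
  have hsumR := aux_sum_sq_integral hRindep hRmem hRmean
  have hsumI := aux_sum_sq_integral hIindep hImem hImean
  have hSR2 : Integrable (fun ω => (∑ t, R t ω) ^ 2) μ := by
    have hm : MemLp (∑ t, R t) 2 μ := memLp_finset_sum' _ (fun t _ => hRmem t)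
    have := (memLp_two_iff_integrable_sq hm.aestronglyMeasurable).1 hm
    simpa only [Finset.sum_apply] using this
  have hSI2 : Integrable (fun ω => (∑ t, I t ω) ^ 2) μ := by
    have hm : MemLp (∑ t, I t) 2 μ := memLp_finset_sum' _ (fun t _ => hImem t)
    have := (memLp_two_iff_integrable_sq hm.aestronglyMeasurable).1 hm
    simpa only [Finset.sum_apply] using this
  have hMne : (M:ℝ) ≠ 0 := Nat.cast_ne_zero.2 hM.ne'
  have hpt : ∀ ω, ‖(M:ℂ)⁻¹ * ∑ t, (y t ω i * (starRingEnd ℂ) (y t ω j) - c)‖ ^ 2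
      = ((M:ℝ)⁻¹) ^ 2 * ((∑ t, R t ω) ^ 2 + (∑ t, I t ω) ^ 2) := by
    intro ω
    show ‖(M:ℂ)⁻¹ * ∑ t, F t ω‖ ^ 2 = _
    rw [norm_mul, mul_pow, norm_inv, Complex.norm_natCast,
      aux_normsq (∑ t, F t ω), Complex.re_sum, Complex.im_sum]
    rfl
  have hfun : (fun ω => ‖(M:ℂ)⁻¹ * ∑ t, (y t ω i * (starRingEnd ℂ) (y t ω j) - c)‖ ^ 2)
      = fun ω => ((M:ℝ)⁻¹) ^ 2 * ((∑ t, R t ω) ^ 2 + (∑ t, I t ω) ^ 2) := funext hpt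
  constructor
  · rw [hfun]
    exact ((hSR2.add hSI2).const_mul _)
  · rw [hfun, integral_const_mul, integral_add hSR2 hSI2, hsumR, hsumI]
    have hsplit : ∀ t, (∫ ω, R t ω ^ 2 ∂μ) + (∫ ω, I t ω ^ 2 ∂μ) = ∫ ω, ‖F t ω‖ ^ 2 ∂μ := by
      intro t
      rw [← integral_add (hR2 t) (hI2 t)]
      refine integral_congr_ae (ae_of_all _ fun ω => ?_)
      show R t ω ^ 2 + I t ω ^ 2 = ‖F t ω‖ ^ 2
      rw [aux_normsq]
      rfl
    have hbound : (∑ t, ∫ ω, R t ω ^ 2 ∂μ) + (∑ t, ∫ ω, I t ω ^ 2 ∂μ) ≤ (M:ℝ) * W := by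
      rw [← Finset.sum_add_distrib]
      calc (∑ t, ((∫ ω, R t ω ^ 2 ∂μ) + (∫ ω, I t ω ^ 2 ∂μ)))
          = ∑ t : Fin M, ∫ ω, ‖F t ω‖ ^ 2 ∂μ := Finset.sum_congr rfl fun t _ => hsplit t
        _ ≤ ∑ t : Fin M, W := Finset.sum_le_sum fun t _ => hF2val t
        _ = (M:ℝ) * W := by simp [mul_comm]
    calc ((M:ℝ)⁻¹) ^ 2 * ((∑ t, ∫ ω, R t ω ^ 2 ∂μ) + (∑ t, ∫ ω, I t ω ^ 2 ∂μ))
        ≤ ((M:ℝ)⁻¹) ^ 2 * ((M:ℝ) * W) := by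
          apply mul_le_mul_of_nonneg_left hbound (by positivity)
      _ = W / M := by field_simp


/-- For i.i.d. random vectors `y(1), …, y(M) : Ω → ℂ^D` with mutually
independent centered coordinates satisfying `E[|y_i|²] = β_i` and `E[|y_i|⁴] ≤ ς β_i²`
(with `ς ≥ 1`), the sample covariance matrix `Σ̂ = (1/M) Σ_t y(t) y(t)ᴴ` and the true
covariance `Σ = diag(β)` satisfy
`E[‖Σ̂ − Σ‖_F²] ≤ max{ς − 1, 1} (Σ_i β_i)²/M`. -/
theorem stmt_18 {Ω : Type*} [MeasurableSpace Ω] (μ : Measure Ω)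
    [IsProbabilityMeasure μ] (D M : ℕ) (hD : 0 < D) (hM : 0 < M)
    (y : Fin M → Ω → Fin D → ℂ) (hmeas : ∀ t, Measurable (y t))
    (hindep : iIndepFun y μ)
    (hident : ∀ t t' : Fin M, Measure.map (y t) μ = Measure.map (y t') μ)
    (hcoord : ∀ t : Fin M, iIndepFun (fun i ω => y t ω i) μ)
    (β : Fin D → ℝ) (hβ : ∀ i, 0 ≤ β i) (ς : ℝ) (hς : 1 ≤ ς)
    (hint4 : ∀ t i, Integrable (fun ω => ‖y t ω i‖ ^ 4) μ)
    (hmean : ∀ t i, ∫ ω, y t ω i ∂μ = 0)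
    (hvar : ∀ t i, ∫ ω, ‖y t ω i‖ ^ 2 ∂μ = β i)
    (hfour : ∀ t i, ∫ ω, ‖y t ω i‖ ^ 4 ∂μ ≤ ς * β i ^ 2) :
    ∫ ω, frobSq ((M : ℂ)⁻¹ • (∑ t, vecMulVec (y t ω) (star (y t ω)))
        - Matrix.diagonal (fun i => (β i : ℂ))) ∂μ
      ≤ max (ς - 1) 1 * (∑ i, β i) ^ 2 / M := by
  classical
  have hpair := fun i j => aux_pair μ D M hM y hmeas hindep hcoord β hβ ς hς
    hint4 hmean hvar hfour i j
  have hMC : (M:ℂ) ≠ 0 := Nat.cast_ne_zero.2 hM.ne'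
  have hMR : (0:ℝ) < (M:ℝ) := by exact_mod_cast hM
  have hentry : ∀ (ω : Ω) (i j : Fin D),
      ((M : ℂ)⁻¹ • (∑ t, vecMulVec (y t ω) (star (y t ω)))
        - Matrix.diagonal (fun i => (β i : ℂ))) i j
      = (M:ℂ)⁻¹ * ∑ t, (y t ω i * (starRingEnd ℂ) (y t ω j)
          - (if i = j then (β i : ℂ) else 0)) := by
    intro ω i j
    simp only [Matrix.sub_apply, Matrix.smul_apply, Matrix.sum_apply,
      Matrix.vecMulVec_apply, Matrix.diagonal_apply, Pi.star_apply, smul_eq_mul,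
      RCLike.star_def]
    rw [Finset.sum_sub_distrib, mul_sub, Finset.sum_const, Finset.card_univ,
      Fintype.card_fin, nsmul_eq_mul]
    congr 1
    rw [← mul_assoc, inv_mul_cancel₀ hMC, one_mul]
  have hfrob : ∀ ω : Ω, frobSq ((M : ℂ)⁻¹ • (∑ t, vecMulVec (y t ω) (star (y t ω)))
        - Matrix.diagonal (fun i => (β i : ℂ)))
      = ∑ i, ∑ j, ‖(M:ℂ)⁻¹ * ∑ t, (y t ω i * (starRingEnd ℂ) (y t ω j)
          - (if i = j then (β i : ℂ) else 0))‖ ^ 2 := by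
    intro ω
    unfold frobSq
    exact Finset.sum_congr rfl fun i _ => Finset.sum_congr rfl fun j _ => by
      rw [hentry ω i j]
  calc ∫ ω, frobSq ((M : ℂ)⁻¹ • (∑ t, vecMulVec (y t ω) (star (y t ω)))
        - Matrix.diagonal (fun i => (β i : ℂ))) ∂μ
      = ∫ ω, ∑ i, ∑ j, ‖(M:ℂ)⁻¹ * ∑ t, (y t ω i * (starRingEnd ℂ) (y t ω j)
          - (if i = j then (β i : ℂ) else 0))‖ ^ 2 ∂μ :=
        integral_congr_ae (ae_of_all _ hfrob)
    _ = ∑ i, ∑ j, ∫ ω, ‖(M:ℂ)⁻¹ * ∑ t, (y t ω i * (starRingEnd ℂ) (y t ω j)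
          - (if i = j then (β i : ℂ) else 0))‖ ^ 2 ∂μ := by
        rw [integral_finset_sum _ (fun i _ => integrable_finset_sum _
          (fun j _ => (hpair i j).1))]
        exact Finset.sum_congr rfl fun i _ =>
          integral_finset_sum _ (fun j _ => (hpair i j).1)
    _ ≤ ∑ i, ∑ j, (if i = j then (ς - 1) * β i ^ 2 else β i * β j) / M :=
        Finset.sum_le_sum fun i _ => Finset.sum_le_sum fun j _ => (hpair i j).2
    _ ≤ max (ς - 1) 1 * (∑ i, β i) ^ 2 / M := by
        have hterm : ∀ i j : Fin D,
            (if i = j then (ς - 1) * β i ^ 2 else β i * β j)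
              ≤ max (ς - 1) 1 * (β i * β j) := by
          intro i j
          split_ifs with h
          · subst h
            have : β i ^ 2 = β i * β i := sq (β i) ▸ by ring
            rw [this]
            exact mul_le_mul_of_nonneg_right (le_max_left _ _)
              (mul_nonneg (hβ i) (hβ i))
          · have h1 : (0:ℝ) ≤ β i * β j := mul_nonneg (hβ i) (hβ j)
            nlinarith [le_max_right (ς - 1) (1:ℝ)]
        have hsum : (∑ i, ∑ j, (if i = j then (ς - 1) * β i ^ 2 else β i * β j))
            ≤ max (ς - 1) 1 * (∑ i, β i) ^ 2 := by
          calc (∑ i, ∑ j, (if i = j then (ς - 1) * β i ^ 2 else β i * β j))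
              ≤ ∑ i, ∑ j, max (ς - 1) 1 * (β i * β j) :=
                Finset.sum_le_sum fun i _ => Finset.sum_le_sum fun j _ => hterm i j
            _ = max (ς - 1) 1 * (∑ i, β i) ^ 2 := by
                rw [sq]
                rw [Finset.sum_mul_sum]
                rw [Finset.mul_sum]
                exact Finset.sum_congr rfl fun i _ => by rw [Finset.mul_sum]
        rw [show (∑ i, ∑ j, (if i = j then (ς - 1) * β i ^ 2 else β i * β j) / M)
            = (∑ i, ∑ j, (if i = j then (ς - 1) * β i ^ 2 else β i * β j)) / M by
          rw [Finset.sum_div]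
          exact Finset.sum_congr rfl fun i _ => (Finset.sum_div _ _ _).symm]
        exact (div_le_div_iff_of_pos_right hMR).2 hsum
end
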